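/- arXiv:2110.13328 — 13 statements merged into one kernel-verified Lean document; each statement's English description precedes it below -/
import Mathlib

section
/- Necessary conditions for invertibility of a double saddle-point matrix: if K is invertible, then (i) there is no nonzero x ∈ ℝⁿ with A x = 0 and B x = 0; (ii) there is no nonzero y ∈ ℝᵐ with Bᵀ y = 0, D y = 0 and C y = 0; and (iii) there is no nonzero z ∈ ℝᵖ with Cᵀ z = 0 and E z = 0. -/
/-!
Each condition exhibits a nonzero kernel vector of `K` supported on one block: for instance
`(x, 0, 0)` is mapped to `(A x, B x, 0)`, the zero block of `K` killing the third component.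
An invertible `K` has trivial kernel.
-/

open Matrix

section DoubleSaddle

variable {l m o R : Type*} [Fintype l] [Fintype m] [Fintype o] [Ring R]

lemma fromBlocks_doubleSaddle_mulVec_sumElim (A : Matrix l l R) (B : Matrix m l R)
    (C : Matrix o m R) (D : Matrix m m R) (E : Matrix o o R) (x : l → R) (y : m → R) (z : o → R) :
    fromBlocks (fromBlocks A Bᵀ B (-D)) (fromRows 0 Cᵀ) (fromCols 0 C) E *ᵥ Sum.elim (Sum.elim x y) z =
      Sum.elim (Sum.elim (A *ᵥ x + Bᵀ *ᵥ y) (B *ᵥ x - D *ᵥ y + Cᵀ *ᵥ z)) (C *ᵥ y + E *ᵥ z) := by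
  simp only [fromBlocks_mulVec, Sum.elim_comp_inl, Sum.elim_comp_inr, fromRows_mulVec,
    fromCols_mulVec_sumElim, ← Sum.elim_add_add, neg_mulVec, zero_mulVec, zero_add, add_zero, sub_eq_add_neg]

end DoubleSaddle

lemma sumElim_sumElim_eq_zero_iff {α β γ M : Type*} [Zero M] {x : α → M} {y : β → M} {z : γ → M} :
    Sum.elim (Sum.elim x y) z = 0 ↔ x = 0 ∧ y = 0 ∧ z = 0 := by
  rw [← Sum.elim_zero_zero, Sum.elim_eq_iff, ← Sum.elim_zero_zero, Sum.elim_eq_iff, and_assoc]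

theorem stmt_0_general (n m p : ℕ)
    (A : Matrix (Fin n) (Fin n) ℝ) (B : Matrix (Fin m) (Fin n) ℝ)
    (C : Matrix (Fin p) (Fin m) ℝ) (D : Matrix (Fin m) (Fin m) ℝ)
    (E : Matrix (Fin p) (Fin p) ℝ)
    (K : Matrix ((Fin n ⊕ Fin m) ⊕ Fin p) ((Fin n ⊕ Fin m) ⊕ Fin p) ℝ)
    (hK : K = fromBlocks (fromBlocks A Bᵀ B (-D)) (fromRows 0 Cᵀ) (fromCols 0 C) E)
    (hinv : IsUnit K) :
    (∀ x : Fin n → ℝ, x ≠ 0 → ¬(A.mulVec x = 0 ∧ B.mulVec x = 0)) ∧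
    (∀ y : Fin m → ℝ, y ≠ 0 → ¬(Bᵀ.mulVec y = 0 ∧ D.mulVec y = 0 ∧ C.mulVec y = 0)) ∧
    (∀ z : Fin p → ℝ, z ≠ 0 → ¬(Cᵀ.mulVec z = 0 ∧ E.mulVec z = 0)) := by
  have hker : ∀ x y z, K *ᵥ Sum.elim (Sum.elim x y) z = 0 → x = 0 ∧ y = 0 ∧ z = 0 :=
    fun x y z h => sumElim_sumElim_eq_zero_iff.1 <|
      mulVec_injective_iff_isUnit.2 hinv (h.trans (mulVec_zero K).symm)
  subst hK
  refine ⟨fun x hx ⟨hA, hB⟩ => hx ?_, fun y hy ⟨hB, hD, hC⟩ => hy ?_, fun z hz ⟨hC, hE⟩ => hz ?_⟩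
  · exact (hker x 0 0 (by rw [fromBlocks_doubleSaddle_mulVec_sumElim]; simp [hA, hB])).1
  · exact (hker 0 y 0 (by rw [fromBlocks_doubleSaddle_mulVec_sumElim]; simp [hB, hD, hC])).2.1
  · exact (hker 0 0 z (by rw [fromBlocks_doubleSaddle_mulVec_sumElim]; simp [hC, hE])).2.2

/-- Necessary conditions for invertibility of a double saddle-point matrix. -/
theorem stmt_0 (n m p : ℕ) (hn : 0 < n) (hm : 0 < m) (hp : 0 < p)
    (A : Matrix (Fin n) (Fin n) ℝ) (B : Matrix (Fin m) (Fin n) ℝ)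
    (C : Matrix (Fin p) (Fin m) ℝ) (D : Matrix (Fin m) (Fin m) ℝ)
    (E : Matrix (Fin p) (Fin p) ℝ)
    (K : Matrix ((Fin n ⊕ Fin m) ⊕ Fin p) ((Fin n ⊕ Fin m) ⊕ Fin p) ℝ)
    (hK : K = fromBlocks (fromBlocks A Bᵀ B (-D)) (fromRows 0 Cᵀ) (fromCols 0 C) E)
    (hinv : IsUnit K) :
    (∀ x : Fin n → ℝ, x ≠ 0 → ¬(A.mulVec x = 0 ∧ B.mulVec x = 0)) ∧
    (∀ y : Fin m → ℝ, y ≠ 0 → ¬(Bᵀ.mulVec y = 0 ∧ D.mulVec y = 0 ∧ C.mulVec y = 0)) ∧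
    (∀ z : Fin p → ℝ, z ≠ 0 → ¬(Cᵀ.mulVec z = 0 ∧ E.mulVec z = 0)) :=
  stmt_0_general n m p A B C D E K hK hinv
end

section
/- Sufficient condition for invertibility of a double saddle-point matrix: if A is invertible, S₁ = D + B A⁻¹ Bᵀ is invertible, and S₂ = E + C S₁⁻¹ Cᵀ is invertible, then K is invertible. -/
open Matrix

/-!
View `K` as a 2×2 block matrix with top-left block `M = [[A, Bᵀ], [B, -D]]`. The Schur complement
of `A` in `M` is `-S₁`, so `M` is invertible and the `(2,2)` block of `M⁻¹` is `-S₁⁻¹`. The coupling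
blocks `[0, Cᵀ]` and `[0, C]` only see that block, so the Schur complement of `M` in `K` is
`E + C S₁⁻¹ Cᵀ = S₂`.
-/

namespace Matrix

variable {l m n o α : Type*} [Fintype l] [Fintype m]

theorem fromCols_zero_mul_mul_fromRows_zero [Semiring α] (G : Matrix o m α)
    (N : Matrix (l ⊕ m) (l ⊕ m) α) (F : Matrix m n α) :
    fromCols (0 : Matrix o l α) G * N * fromRows (0 : Matrix l n α) F = G * N.toBlocks₂₂ * F := by
  rw [← fromBlocks_toBlocks N, fromCols_mul_fromBlocks, fromCols_mul_fromRows]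
  simp

variable [DecidableEq l] [DecidableEq m]

theorem toBlocks₂₂_invOf_fromBlocks₁₁ [CommRing α] (A : Matrix l l α) (B : Matrix l m α)
    (C : Matrix m l α) (D : Matrix m m α) [Invertible A] [Invertible (D - C * ⅟A * B)]
    [Invertible (fromBlocks A B C D)] :
    (⅟(fromBlocks A B C D)).toBlocks₂₂ = ⅟(D - C * ⅟A * B) := by
  rw [invOf_fromBlocks₁₁_eq, toBlocks_fromBlocks₂₂]

theorem isUnit_blockTridiagonal_of_isUnit_schur [Fintype o] [DecidableEq o] [CommRing α]
    {A : Matrix l l α} {B : Matrix l m α} {C : Matrix m l α} {D : Matrix m m α}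
    {E : Matrix o o α} {F : Matrix m o α} {G : Matrix o m α} (hA : IsUnit A)
    (hS : IsUnit (D - C * A⁻¹ * B)) (hT : IsUnit (E - G * (D - C * A⁻¹ * B)⁻¹ * F)) :
    IsUnit (fromBlocks (fromBlocks A B C D) (fromRows 0 F) (fromCols 0 G) E) := by
  let := hA.invertible
  rw [← invOf_eq_nonsing_inv A] at hS hT
  let := hS.invertible
  let := fromBlocks₁₁Invertible A B C D
  rwa [isUnit_fromBlocks_iff_of_invertible₁₁, fromCols_zero_mul_mul_fromRows_zero,
    toBlocks₂₂_invOf_fromBlocks₁₁, invOf_eq_nonsing_inv]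

end Matrix

theorem stmt_1_general (n m p : ℕ)
    (A : Matrix (Fin n) (Fin n) ℝ) (B : Matrix (Fin m) (Fin n) ℝ)
    (C : Matrix (Fin p) (Fin m) ℝ) (D : Matrix (Fin m) (Fin m) ℝ)
    (E : Matrix (Fin p) (Fin p) ℝ)
    (K : Matrix ((Fin n ⊕ Fin m) ⊕ Fin p) ((Fin n ⊕ Fin m) ⊕ Fin p) ℝ)
    (hK : K = fromBlocks (fromBlocks A Bᵀ B (-D)) (fromRows 0 Cᵀ) (fromCols 0 C) E)
    (S₁ : Matrix (Fin m) (Fin m) ℝ) (hS₁ : S₁ = D + B * A⁻¹ * Bᵀ)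
    (S₂ : Matrix (Fin p) (Fin p) ℝ) (hS₂ : S₂ = E + C * S₁⁻¹ * Cᵀ)
    (hA : IsUnit A) (hS₁u : IsUnit S₁) (hS₂u : IsUnit S₂) :
    IsUnit K := by
  have hSchur : -D - B * A⁻¹ * Bᵀ = -S₁ := by rw [hS₁, neg_add']
  have hSchur₂ : E - C * (-S₁)⁻¹ * Cᵀ = S₂ := by
    have hneg : (-S₁)⁻¹ = -S₁⁻¹ := inv_eq_left_inv <| by
      rw [neg_mul_neg, nonsing_inv_mul S₁ ((isUnit_iff_isUnit_det S₁).mp hS₁u)]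
    rw [hS₂, hneg, Matrix.mul_neg, Matrix.neg_mul, sub_neg_eq_add]
  rw [hK]
  refine isUnit_blockTridiagonal_of_isUnit_schur hA ?_ ?_ <;> rw [hSchur]
  · exact hS₁u.neg
  · rwa [hSchur₂]

/-- Sufficient condition for invertibility of a double saddle-point matrix. -/
theorem stmt_1 (n m p : ℕ) (hn : 0 < n) (hm : 0 < m) (hp : 0 < p)
    (A : Matrix (Fin n) (Fin n) ℝ) (B : Matrix (Fin m) (Fin n) ℝ)
    (C : Matrix (Fin p) (Fin m) ℝ) (D : Matrix (Fin m) (Fin m) ℝ)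
    (E : Matrix (Fin p) (Fin p) ℝ)
    (K : Matrix ((Fin n ⊕ Fin m) ⊕ Fin p) ((Fin n ⊕ Fin m) ⊕ Fin p) ℝ)
    (hK : K = fromBlocks (fromBlocks A Bᵀ B (-D)) (fromRows 0 Cᵀ) (fromCols 0 C) E)
    (S₁ : Matrix (Fin m) (Fin m) ℝ) (hS₁ : S₁ = D + B * A⁻¹ * Bᵀ)
    (S₂ : Matrix (Fin p) (Fin p) ℝ) (hS₂ : S₂ = E + C * S₁⁻¹ * Cᵀ)
    (hA : IsUnit A) (hS₁u : IsUnit S₁) (hS₂u : IsUnit S₂) :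
    IsUnit K :=
  stmt_1_general n m p A B C D E K hK S₁ hS₁ S₂ hS₂ hA hS₁u hS₂u
end

section
/- Block LDLᵀ factorization of a double saddle-point matrix: if A and D are symmetric, A is invertible, and S₁ = D + B A⁻¹ Bᵀ is invertible, then, with S₂ = E + C S₁⁻¹ Cᵀ, one has K = L · blockdiag(A, −S₁, S₂) · Lᵀ, where L is the block lower triangular matrix L = [[I, 0, 0], [B A⁻¹, I, 0], [0, −C S₁⁻¹, I]]. -/
/-! Both levels are instances of `L * D * Lᵀ` with `L` block lower triangular and `D` block
diagonal. The inner level is the Schur-complement factorization with respect to the symmetric `A`.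
At the outer level `X * D₁ = [0, (C S₁⁻¹) S₁] = [0, C]`, which the unit lower triangular `L₁ᵀ`
leaves unchanged, and the symmetry of `S₁` turns the corner block into `S₂ - C S₁⁻¹ Cᵀ = E`. -/

open Matrix

namespace Matrix

variable {l m R : Type*} [Fintype l] [Fintype m] [CommRing R]

theorem fromBlocks_lower_mul_blockDiag_mul_transpose
    (L₁₁ : Matrix l l R) (L₂₁ : Matrix m l R) (L₂₂ : Matrix m m R)
    (D₁ : Matrix l l R) (D₂ : Matrix m m R) :
    fromBlocks L₁₁ 0 L₂₁ L₂₂ * fromBlocks D₁ 0 0 D₂ * (fromBlocks L₁₁ 0 L₂₁ L₂₂)ᵀ =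
      fromBlocks (L₁₁ * D₁ * L₁₁ᵀ) (L₁₁ * D₁ * L₂₁ᵀ) (L₂₁ * D₁ * L₁₁ᵀ)
        (L₂₁ * D₁ * L₂₁ᵀ + L₂₂ * D₂ * L₂₂ᵀ) := by
  simp [fromBlocks_transpose, fromBlocks_multiply]

theorem fromBlocks_transpose_eq_ldlt [DecidableEq l] [DecidableEq m]
    (A : Matrix l l R) (B : Matrix m l R) (D : Matrix m m R)
    (hA : Aᵀ = A) (hdet : IsUnit A.det) :
    fromBlocks A Bᵀ B D =
      fromBlocks 1 0 (B * A⁻¹) 1 * fromBlocks A 0 0 (D - B * A⁻¹ * Bᵀ) *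
        (fromBlocks 1 0 (B * A⁻¹) 1)ᵀ := by
  let _ : Invertible A := invertibleOfIsUnitDet A hdet
  rw [fromBlocks_eq_of_invertible₁₁, fromBlocks_transpose, invOf_eq_nonsing_inv]
  simp [transpose_mul, transpose_nonsing_inv, hA]

end Matrix

theorem stmt_2_general (n m p : ℕ)
    (A : Matrix (Fin n) (Fin n) ℝ) (B : Matrix (Fin m) (Fin n) ℝ)
    (C : Matrix (Fin p) (Fin m) ℝ) (D : Matrix (Fin m) (Fin m) ℝ)
    (E : Matrix (Fin p) (Fin p) ℝ)
    (K : Matrix ((Fin n ⊕ Fin m) ⊕ Fin p) ((Fin n ⊕ Fin m) ⊕ Fin p) ℝ)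
    (hK : K = fromBlocks (fromBlocks A Bᵀ B (-D)) (fromRows 0 Cᵀ) (fromCols 0 C) E)
    (hAsymm : Aᵀ = A) (hDsymm : Dᵀ = D)
    (hA : IsUnit A)
    (S₁ : Matrix (Fin m) (Fin m) ℝ) (hS₁ : S₁ = D + B * A⁻¹ * Bᵀ)
    (hS₁u : IsUnit S₁)
    (S₂ : Matrix (Fin p) (Fin p) ℝ) (hS₂ : S₂ = E + C * S₁⁻¹ * Cᵀ)
    (L : Matrix ((Fin n ⊕ Fin m) ⊕ Fin p) ((Fin n ⊕ Fin m) ⊕ Fin p) ℝ)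
    (hL : L = fromBlocks (fromBlocks 1 0 (B * A⁻¹) 1) 0
        (fromCols 0 (-(C * S₁⁻¹))) 1) :
    K = L * (fromBlocks (fromBlocks A 0 0 (-S₁)) 0 0 S₂) * Lᵀ := by
  have hS₁symm : S₁ᵀ = S₁ := by
    simp [hS₁, transpose_mul, transpose_nonsing_inv, hAsymm, hDsymm, Matrix.mul_assoc]
  have hS₁det : IsUnit S₁.det := (isUnit_iff_isUnit_det S₁).mp hS₁u
  set L₁ : Matrix (Fin n ⊕ Fin m) (Fin n ⊕ Fin m) ℝ := fromBlocks 1 0 (B * A⁻¹) 1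
  set D₁ : Matrix (Fin n ⊕ Fin m) (Fin n ⊕ Fin m) ℝ := fromBlocks A 0 0 (-S₁)
  set X : Matrix (Fin p) (Fin n ⊕ Fin m) ℝ := fromCols 0 (-(C * S₁⁻¹))
  have inner : fromBlocks A Bᵀ B (-D) = L₁ * D₁ * L₁ᵀ := by
    have hS₁neg : -D - B * A⁻¹ * Bᵀ = -S₁ := by rw [hS₁, neg_add, sub_eq_add_neg]
    rw [fromBlocks_transpose_eq_ldlt A B (-D) hAsymm ((isUnit_iff_isUnit_det A).mp hA), hS₁neg]
  have hXD₁ : X * D₁ = fromCols 0 C := by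
    simp [X, D₁, fromCols_mul_fromBlocks, Matrix.mul_assoc, nonsing_inv_mul S₁ hS₁det]
  have lower : X * D₁ * L₁ᵀ = fromCols 0 C := by
    simp [hXD₁, L₁, fromBlocks_transpose, fromCols_mul_fromBlocks]
  have upper : L₁ * D₁ * Xᵀ = fromRows 0 Cᵀ := by
    have hD₁ : D₁ᵀ = D₁ := by simp [D₁, fromBlocks_transpose, hAsymm, hS₁symm]
    simpa [transpose_mul, hD₁, Matrix.mul_assoc, transpose_fromCols] using congrArg transpose lower
  have corner : X * D₁ * Xᵀ + 1 * S₂ * 1ᵀ = E := by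
    simp [hXD₁, X, transpose_fromCols, fromCols_mul_fromRows, transpose_nonsing_inv, hS₁symm,
      hS₂, Matrix.mul_assoc]
  rw [hK, hL, fromBlocks_lower_mul_blockDiag_mul_transpose, inner, lower, upper, corner]

/-- Block LDLᵀ factorization of a double saddle-point matrix. -/
theorem stmt_2 (n m p : ℕ) (hn : 0 < n) (hm : 0 < m) (hp : 0 < p)
    (A : Matrix (Fin n) (Fin n) ℝ) (B : Matrix (Fin m) (Fin n) ℝ)
    (C : Matrix (Fin p) (Fin m) ℝ) (D : Matrix (Fin m) (Fin m) ℝ)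
    (E : Matrix (Fin p) (Fin p) ℝ)
    (K : Matrix ((Fin n ⊕ Fin m) ⊕ Fin p) ((Fin n ⊕ Fin m) ⊕ Fin p) ℝ)
    (hK : K = fromBlocks (fromBlocks A Bᵀ B (-D)) (fromRows 0 Cᵀ) (fromCols 0 C) E)
    (hAsymm : Aᵀ = A) (hDsymm : Dᵀ = D)
    (hA : IsUnit A)
    (S₁ : Matrix (Fin m) (Fin m) ℝ) (hS₁ : S₁ = D + B * A⁻¹ * Bᵀ)
    (hS₁u : IsUnit S₁)
    (S₂ : Matrix (Fin p) (Fin p) ℝ) (hS₂ : S₂ = E + C * S₁⁻¹ * Cᵀ)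
    (L : Matrix ((Fin n ⊕ Fin m) ⊕ Fin p) ((Fin n ⊕ Fin m) ⊕ Fin p) ℝ)
    (hL : L = fromBlocks (fromBlocks 1 0 (B * A⁻¹) 1) 0
        (fromCols 0 (-(C * S₁⁻¹))) 1) :
    K = L * (fromBlocks (fromBlocks A 0 0 (-S₁)) 0 0 S₂) * Lᵀ :=
  stmt_2_general n m p A B C D E K hK hAsymm hDsymm hA S₁ hS₁ hS₁u S₂ hS₂ L hL
end

section
/- Inertia of a double saddle-point matrix: listed with multiplicity, exactly n+p of the eigenvalues of the symmetric matrix K are positive and exactly m are negative (in particular none are zero). -/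
/-!
`K` is congruent, through a unit block lower-triangular matrix `L` (a block `LDLᵀ`
factorization), to the block diagonal matrix `G = diag(A, -S₁, S₂)`. By Sylvester's law of
inertia, the numbers of positive and negative eigenvalues of `K` are the signature of the
quadratic form of `G`. That form is positive definite on the `n + p` coordinates of the first
and last blocks and negative definite on the `m` coordinates of the middle block, and these
dimensions already add up to `n + m + p`, which pins down the signature and leaves no room for a
zero eigenvalue.
-/

open Matrix QuadraticMap Finset

lemma Matrix.toQuadraticForm'_apply {ι R : Type*} [Fintype ι] [DecidableEq ι] [CommRing R]
    (K : Matrix ι ι R) (x : ι → R) : K.toQuadraticForm' x = x ⬝ᵥ K *ᵥ x := by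
  simp [toQuadraticForm', toLinearMap₂'_apply']

theorem Matrix.equivalent_toQuadraticForm'_mul_mul_transpose {ι R : Type*} [Fintype ι]
    [DecidableEq ι] [CommRing R] {L : Matrix ι ι R} (hL : IsUnit L.det) (G : Matrix ι ι R) :
    (L * G * Lᵀ).toQuadraticForm'.Equivalent G.toQuadraticForm' := by
  refine ⟨⟨toLinearEquiv' Lᵀ (invertibleOfIsUnitDet _ (by rwa [det_transpose])), fun x => ?_⟩⟩
  change G.toQuadraticForm' (Lᵀ *ᵥ x) = _
  rw [toQuadraticForm'_apply, toQuadraticForm'_apply, ← mulVec_mulVec, ← mulVec_mulVec,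
    dotProduct_mulVec x, mulVec_transpose]

section Hermitian

variable {ι : Type*} [Fintype ι] [DecidableEq ι] {K : Matrix ι ι ℝ}

theorem Matrix.IsHermitian.equivalent_weightedSumSquares (hK : K.IsHermitian) :
    K.toQuadraticForm'.Equivalent (weightedSumSquares ℝ hK.eigenvalues) := by
  refine ⟨⟨UnitaryGroup.toLinearEquiv (star hK.eigenvectorUnitary), fun x => ?_⟩⟩
  set U : Matrix ι ι ℝ := (hK.eigenvectorUnitary : Matrix ι ι ℝ)
  have hK' : K = U * diagonal hK.eigenvalues * Uᵀ := by
    conv_lhs => rw [hK.spectral_theorem]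
    rfl
  change weightedSumSquares ℝ hK.eigenvalues (Uᵀ *ᵥ x) = _
  rw [weightedSumSquares_apply, toQuadraticForm'_apply]
  conv_rhs => rw [hK', ← mulVec_mulVec, ← mulVec_mulVec, dotProduct_mulVec, ← mulVec_transpose]
  simp only [dotProduct, mulVec_diagonal, smul_eq_mul]
  exact sum_congr rfl fun i _ => by ring

theorem Matrix.IsHermitian.sigPos_toQuadraticForm' (hK : K.IsHermitian) :
    sigPos K.toQuadraticForm' = #{i | 0 < hK.eigenvalues i} := by
  rw [QuadraticForm.sigPos_of_equiv_weightedSumSquares hK.equivalent_weightedSumSquares,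
    Set.ncard_eq_toFinset_card', Set.toFinset_ofPred]

theorem Matrix.IsHermitian.sigNeg_toQuadraticForm' (hK : K.IsHermitian) :
    sigNeg K.toQuadraticForm' = #{i | hK.eigenvalues i < 0} := by
  rw [QuadraticForm.sigNeg_of_equiv_weightedSumSquares hK.equivalent_weightedSumSquares,
    Set.ncard_eq_toFinset_card', Set.toFinset_ofPred]

end Hermitian

theorem le_sigPos_of_injective {𝕜 M N : Type*} [Field 𝕜] [LinearOrder 𝕜] [AddCommGroup M]
    [Module 𝕜 M] [FiniteDimensional 𝕜 M] [AddCommGroup N] [Module 𝕜 N]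
    {Q : QuadraticForm 𝕜 M} {f : N →ₗ[𝕜] M} (hf : Function.Injective f) (hQ : (Q.comp f).PosDef) :
    Module.finrank 𝕜 N ≤ sigPos Q := by
  rw [← LinearMap.finrank_range_of_inj hf]
  refine le_sigPos_of_posDef Q fun ⟨_, y, rfl⟩ hy => hQ y ?_
  rintro rfl
  exact hy (by simp)

theorem Finset.forall_ne_zero_of_card_filter_pos_add_card_filter_neg {ι R : Type*} [Fintype ι]
    [Zero R] [LinearOrder R] (w : ι → R)
    (h : #{i | 0 < w i} + #{i | w i < 0} = Fintype.card ι) (i : ι) : w i ≠ 0 := by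
  classical
  intro hi
  have hlt : #(univ.filter (0 < w ·) ∪ univ.filter (w · < 0)) < Fintype.card ι :=
    card_lt_univ_of_notMem (x := i) (by simp [hi])
  rw [card_union_of_disjoint (disjoint_filter.2 fun j _ h₁ h₂ => (h₁.trans h₂).false)] at hlt
  omega

theorem Matrix.sumElim_dotProduct_fromBlocks_zero_mulVec {ι₁ ι₂ R : Type*} [Fintype ι₁]
    [Fintype ι₂] [CommRing R] (A : Matrix ι₁ ι₁ R) (D : Matrix ι₂ ι₂ R) (u : ι₁ → R)
    (v : ι₂ → R) :
    Sum.elim u v ⬝ᵥ fromBlocks A 0 0 D *ᵥ Sum.elim u v = u ⬝ᵥ A *ᵥ u + v ⬝ᵥ D *ᵥ v := by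
  simp [fromBlocks_mulVec, sumElim_dotProduct_sumElim]

section Blocks

variable {ι₁ ι₂ ι₃ : Type*} [Fintype ι₁] [Fintype ι₂] [Fintype ι₃]
  [DecidableEq ι₁] [DecidableEq ι₂] [DecidableEq ι₃]

theorem Matrix.exists_fromBlocks_saddle_eq_mul_mul_transpose {R : Type*} [CommRing R]
    {A : Matrix ι₁ ι₁ R} {B : Matrix ι₂ ι₁ R} {C : Matrix ι₃ ι₂ R} {D S₁ : Matrix ι₂ ι₂ R}
    {E S₂ : Matrix ι₃ ι₃ R} (hA : IsUnit A.det) (hAs : A.IsSymm) (hS₁ : IsUnit S₁.det)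
    (hS₁s : S₁.IsSymm) (hS₁D : S₁ = D + B * A⁻¹ * Bᵀ) (hS₂E : S₂ = E + C * S₁⁻¹ * Cᵀ) :
    ∃ L : Matrix ((ι₁ ⊕ ι₂) ⊕ ι₃) ((ι₁ ⊕ ι₂) ⊕ ι₃) R, IsUnit L.det ∧
      fromBlocks (fromBlocks A Bᵀ B (-D)) (fromRows 0 Cᵀ) (fromCols 0 C) E =
        L * fromBlocks (fromBlocks A 0 0 (-S₁)) 0 0 S₂ * Lᵀ := by
  refine ⟨fromBlocks (fromBlocks 1 0 (B * A⁻¹) 1) 0 (fromCols 0 (-(C * S₁⁻¹))) 1, by simp, ?_⟩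
  have hAi : A⁻¹ᵀ = A⁻¹ := by rw [transpose_nonsing_inv, hAs.eq]
  have hS₁i : S₁⁻¹ᵀ = S₁⁻¹ := by rw [transpose_nonsing_inv, hS₁s.eq]
  have hD : B * (A⁻¹ * Bᵀ) + -S₁ = -D := by rw [hS₁D, ← Matrix.mul_assoc]; abel
  have hE : -(C * (S₁⁻¹ * Cᵀ)) + S₂ = E := by rw [hS₂E, ← Matrix.mul_assoc]; abel
  simp only [fromBlocks_transpose, transpose_fromCols, transpose_one, transpose_zero,
    transpose_neg, transpose_mul, hAi, hS₁i, fromBlocks_multiply, fromCols_mul_fromBlocks,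
    fromBlocks_mul_fromRows, fromCols_mul_fromRows, Matrix.mul_one, Matrix.one_mul,
    Matrix.mul_zero, Matrix.zero_mul, add_zero, zero_add, Matrix.neg_mul, Matrix.mul_neg,
    neg_neg, neg_zero, nonsing_inv_mul_cancel_right _ _ hA, nonsing_inv_mul_cancel_right _ _ hS₁,
    mul_nonsing_inv_cancel_left _ _ hA, mul_nonsing_inv_cancel_left _ _ hS₁, hD, hE]

theorem Matrix.toQuadraticForm'_fromBlocks_sumElim {R : Type*} [CommRing R]
    (A : Matrix ι₁ ι₁ R) (S : Matrix ι₂ ι₂ R) (T : Matrix ι₃ ι₃ R) (u : ι₁ → R) (v : ι₂ → R)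
    (w : ι₃ → R) :
    (fromBlocks (fromBlocks A 0 0 (-S)) 0 0 T).toQuadraticForm' (Sum.elim (Sum.elim u v) w) =
      u ⬝ᵥ A *ᵥ u - v ⬝ᵥ S *ᵥ v + w ⬝ᵥ T *ᵥ w := by
  simp only [toQuadraticForm'_apply, sumElim_dotProduct_fromBlocks_zero_mulVec, neg_mulVec,
    dotProduct_neg, sub_eq_add_neg]

variable {A : Matrix ι₁ ι₁ ℝ} {S : Matrix ι₂ ι₂ ℝ} {T : Matrix ι₃ ι₃ ℝ}

theorem card_add_card_le_sigPos_toQuadraticForm'_fromBlocks (hA : A.PosDef) (hT : T.PosDef) :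
    Fintype.card ι₁ + Fintype.card ι₃ ≤
      sigPos (fromBlocks (fromBlocks A 0 0 (-S)) 0 0 T).toQuadraticForm' := by
  set Q := (fromBlocks (fromBlocks A 0 0 (-S)) 0 0 T).toQuadraticForm'
  let f := (LinearEquiv.sumArrowLequivProdArrow _ ι₃ ℝ ℝ).symm.toLinearMap ∘ₗ
    ((LinearEquiv.sumArrowLequivProdArrow ι₁ ι₂ ℝ ℝ).symm.toLinearMap ∘ₗ
      LinearMap.inl ℝ _ _).prodMap LinearMap.id
  have hf : Function.Injective f := by
    simp only [f, LinearMap.coe_comp, LinearMap.coe_prodMap, LinearEquiv.coe_coe,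
      LinearMap.id_coe]
    exact (LinearEquiv.injective _).comp
      (((LinearEquiv.injective _).comp LinearMap.inl_injective).prodMap Function.injective_id)
  simpa using le_sigPos_of_injective hf fun ⟨u, w⟩ huw => by
    change 0 < Q (Sum.elim (Sum.elim u 0) w)
    rw [toQuadraticForm'_fromBlocks_sumElim, mulVec_zero, dotProduct_zero, sub_zero]
    rcases eq_or_ne u 0 with rfl | hu
    · have hw : w ≠ 0 := fun hw => huw (by simp [hw])
      simpa using hT.dotProduct_mulVec_pos hw
    · exact add_pos_of_pos_of_nonneg (by simpa using hA.dotProduct_mulVec_pos hu)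
        (by simpa using hT.posSemidef.dotProduct_mulVec_nonneg w)

theorem card_le_sigNeg_toQuadraticForm'_fromBlocks (hS : S.PosDef) :
    Fintype.card ι₂ ≤ sigNeg (fromBlocks (fromBlocks A 0 0 (-S)) 0 0 T).toQuadraticForm' := by
  set Q := (fromBlocks (fromBlocks A 0 0 (-S)) 0 0 T).toQuadraticForm'
  let f := (LinearEquiv.sumArrowLequivProdArrow _ ι₃ ℝ ℝ).symm.toLinearMap ∘ₗ
    LinearMap.inl ℝ _ _ ∘ₗ (LinearEquiv.sumArrowLequivProdArrow ι₁ ι₂ ℝ ℝ).symm.toLinearMap ∘ₗ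
      LinearMap.inr ℝ _ _
  have hf : Function.Injective f := by
    simp only [f, LinearMap.coe_comp, LinearEquiv.coe_coe]
    exact (LinearEquiv.injective _).comp
      (LinearMap.inl_injective.comp ((LinearEquiv.injective _).comp LinearMap.inr_injective))
  rw [← sigPos_neg]
  simpa using le_sigPos_of_injective (Q := -Q) hf fun v hv => by
    change 0 < -Q (Sum.elim (Sum.elim 0 v) 0)
    simpa [Q, toQuadraticForm'_fromBlocks_sumElim] using hS.dotProduct_mulVec_pos hv

theorem sigPos_and_sigNeg_toQuadraticForm'_fromBlocks (hA : A.PosDef) (hS : S.PosDef)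
    (hT : T.PosDef) :
    sigPos (fromBlocks (fromBlocks A 0 0 (-S)) 0 0 T).toQuadraticForm' =
        Fintype.card ι₁ + Fintype.card ι₃ ∧
      sigNeg (fromBlocks (fromBlocks A 0 0 (-S)) 0 0 T).toQuadraticForm' = Fintype.card ι₂ := by
  have hpos := card_add_card_le_sigPos_toQuadraticForm'_fromBlocks (S := S) hA hT
  have hneg := card_le_sigNeg_toQuadraticForm'_fromBlocks (A := A) (T := T) hS
  have htot := QuadraticForm.sigPos_add_sigNeg_add_radical
    (Q := (fromBlocks (fromBlocks A 0 0 (-S)) 0 0 T).toQuadraticForm')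
  simp only [Module.finrank_fintype_fun_eq_card, Fintype.card_sum] at htot
  omega

end Blocks

theorem stmt_3_general (n m p : ℕ)
    (A : Matrix (Fin n) (Fin n) ℝ) (B : Matrix (Fin m) (Fin n) ℝ)
    (C : Matrix (Fin p) (Fin m) ℝ) (D : Matrix (Fin m) (Fin m) ℝ)
    (E : Matrix (Fin p) (Fin p) ℝ)
    (hA : A.PosDef)
    (S₁ : Matrix (Fin m) (Fin m) ℝ) (hS₁ : S₁ = D + B * A⁻¹ * Bᵀ)
    (S₂ : Matrix (Fin p) (Fin p) ℝ) (hS₂ : S₂ = E + C * S₁⁻¹ * Cᵀ)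
    (hS₁pd : S₁.PosDef) (hS₂pd : S₂.PosDef)
    (K : Matrix ((Fin n ⊕ Fin m) ⊕ Fin p) ((Fin n ⊕ Fin m) ⊕ Fin p) ℝ)
    (hK : K = fromBlocks (fromBlocks A Bᵀ B (-D)) (fromRows 0 Cᵀ) (fromCols 0 C) E)
    (hKherm : K.IsHermitian) :
    (Finset.univ.filter fun i => 0 < hKherm.eigenvalues i).card = n + p ∧
    (Finset.univ.filter fun i => hKherm.eigenvalues i < 0).card = m ∧
    (∀ i, hKherm.eigenvalues i ≠ 0) := by
  obtain ⟨L, hL, hKL⟩ := exists_fromBlocks_saddle_eq_mul_mul_transpose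
    ((isUnit_iff_isUnit_det A).mp hA.isUnit) (isHermitian_iff_isSymm.mp hA.isHermitian)
    ((isUnit_iff_isUnit_det S₁).mp hS₁pd.isUnit) (isHermitian_iff_isSymm.mp hS₁pd.isHermitian)
    hS₁ hS₂
  have hequiv : K.toQuadraticForm'.Equivalent
      (fromBlocks (fromBlocks A 0 0 (-S₁)) 0 0 S₂).toQuadraticForm' := by
    rw [hK, hKL]
    exact equivalent_toQuadraticForm'_mul_mul_transpose hL _
  obtain ⟨hpos, hneg⟩ := sigPos_and_sigNeg_toQuadraticForm'_fromBlocks hA hS₁pd hS₂pd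
  have hcard_pos : #{i | 0 < hKherm.eigenvalues i} = n + p := by
    rw [← hKherm.sigPos_toQuadraticForm', hequiv.sigPos_eq, hpos, Fintype.card_fin,
      Fintype.card_fin]
  have hcard_neg : #{i | hKherm.eigenvalues i < 0} = m := by
    rw [← hKherm.sigNeg_toQuadraticForm', hequiv.sigNeg_eq, hneg, Fintype.card_fin]
  refine ⟨hcard_pos, hcard_neg, forall_ne_zero_of_card_filter_pos_add_card_filter_neg _ ?_⟩
  simp only [hcard_pos, hcard_neg, Fintype.card_sum, Fintype.card_fin]
  ring

/-- Inertia of a double saddle-point matrix: exactly `n + p` positive eigenvalues and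
exactly `m` negative eigenvalues (counted with multiplicity), and none are zero. -/
theorem stmt_3 (n m p : ℕ) (hn : 0 < n) (hm : 0 < m) (hp : 0 < p)
    (A : Matrix (Fin n) (Fin n) ℝ) (B : Matrix (Fin m) (Fin n) ℝ)
    (C : Matrix (Fin p) (Fin m) ℝ) (D : Matrix (Fin m) (Fin m) ℝ)
    (E : Matrix (Fin p) (Fin p) ℝ)
    (hA : A.PosDef) (hD : D.PosSemidef) (hE : E.PosSemidef)
    (S₁ : Matrix (Fin m) (Fin m) ℝ) (hS₁ : S₁ = D + B * A⁻¹ * Bᵀ)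
    (S₂ : Matrix (Fin p) (Fin p) ℝ) (hS₂ : S₂ = E + C * S₁⁻¹ * Cᵀ)
    (hS₁pd : S₁.PosDef) (hS₂pd : S₂.PosDef)
    (K : Matrix ((Fin n ⊕ Fin m) ⊕ Fin p) ((Fin n ⊕ Fin m) ⊕ Fin p) ℝ)
    (hK : K = fromBlocks (fromBlocks A Bᵀ B (-D)) (fromRows 0 Cᵀ) (fromCols 0 C) E)
    (hKherm : K.IsHermitian) :
    (Finset.univ.filter fun i => 0 < hKherm.eigenvalues i).card = n + p ∧
    (Finset.univ.filter fun i => hKherm.eigenvalues i < 0).card = m ∧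
    (∀ i, hKherm.eigenvalues i ≠ 0) :=
  stmt_3_general n m p A B C D E hA S₁ hS₁ S₂ hS₂ hS₁pd hS₂pd K hK hKherm
end

section
/- Root structure of the saddle-point cubic: let a, b, c, d, e be real numbers with a > 0, d ≥ 0, e ≥ 0, s₁ := d + b²/a > 0 and s₂ := e + c²/s₁ > 0. Then the cubic polynomial p(λ) = λ³ + (d − a − e)λ² + (ae − ad − de − b² − c²)λ + (ade + ac² + b²e) has three real roots, exactly two of which are positive and one negative: there exist real numbers x < 0 and y, z > 0 such that p(λ) = (λ − x)(λ − y)(λ − z) for all λ ∈ ℝ. -/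
/-!
Write `p(λ) = (λ - e) q(λ) - c² (λ - a)` with `q(λ) = (λ - a)(λ + d) - b²`. Since `q(a) = -b² ≤ 0`,
`q` has a root `r ≥ a > 0`, and there `p(r) = -c² (r - a) ≤ 0`. On the other hand
`p(0) = a s₁ s₂ > 0`, so `p` has a root `y ∈ (0, r]`. Dividing out `λ - y` leaves a monic
quadratic whose constant term is `-p(0) / y < 0`, hence with one negative and one positive root.
-/

lemma exists_root_ge_of_quadratic_nonpos (B C a : ℝ) (ha : a ^ 2 + B * a + C ≤ 0) :
    ∃ r : ℝ, a ≤ r ∧ r ^ 2 + B * r + C = 0 := by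
  have hdisc : (2 * a + B) ^ 2 ≤ B ^ 2 - 4 * C := by nlinarith
  have hsq : √(B ^ 2 - 4 * C) ^ 2 = B ^ 2 - 4 * C :=
    Real.sq_sqrt ((sq_nonneg _).trans hdisc)
  have hge : 2 * a + B ≤ √(B ^ 2 - 4 * C) :=
    (le_abs_self _).trans (Real.abs_le_sqrt hdisc)
  exact ⟨(-B + √(B ^ 2 - 4 * C)) / 2, by linarith, by linear_combination hsq / 4⟩

lemma exists_neg_pos_roots_of_quadratic (B C : ℝ) (hC : C < 0) :
    ∃ x z : ℝ, x < 0 ∧ 0 < z ∧ ∀ l : ℝ, l ^ 2 + B * l + C = (l - x) * (l - z) := by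
  have hdisc : B ^ 2 < B ^ 2 - 4 * C := by linarith
  have hsq : √(B ^ 2 - 4 * C) ^ 2 = B ^ 2 - 4 * C := Real.sq_sqrt (by linarith [sq_nonneg B])
  have hgt : |B| < √(B ^ 2 - 4 * C) := by
    rw [← Real.sqrt_sq_eq_abs]
    exact Real.sqrt_lt_sqrt (sq_nonneg B) hdisc
  refine ⟨(-B - √(B ^ 2 - 4 * C)) / 2, (-B + √(B ^ 2 - 4 * C)) / 2, ?_, ?_, ?_⟩
  · linarith [neg_le_abs B]
  · linarith [le_abs_self B]
  · intro l
    linear_combination hsq / 4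

lemma exists_neg_pos_pos_roots_of_cubic (B C D t : ℝ) (hD : 0 < D) (ht : 0 < t)
    (hpt : t ^ 3 + B * t ^ 2 + C * t + D ≤ 0) :
    ∃ x y z : ℝ, x < 0 ∧ 0 < y ∧ 0 < z ∧
      ∀ l : ℝ, l ^ 3 + B * l ^ 2 + C * l + D = (l - x) * (l - y) * (l - z) := by
  obtain ⟨y, ⟨hy0, -⟩, hy⟩ : ∃ y ∈ Set.Icc 0 t, y ^ 3 + B * y ^ 2 + C * y + D = 0 :=
    intermediate_value_Icc' ht.le (by fun_prop) ⟨hpt, by simpa using hD.le⟩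
  have hy_pos : 0 < y := hy0.lt_of_ne (by rintro rfl; simp at hy; linarith)
  have hconst : y ^ 2 + B * y + C < 0 := by nlinarith
  obtain ⟨x, z, hx, hz, hq⟩ := exists_neg_pos_roots_of_quadratic (B + y) _ hconst
  exact ⟨x, y, z, hx, hy_pos, hz, fun l => by linear_combination (l - y) * hq l + hy⟩

theorem stmt_4_general (a b c d e : ℝ) (ha : 0 < a)
    (hs₁ : 0 < d + b ^ 2 / a) (hs₂ : 0 < e + c ^ 2 / (d + b ^ 2 / a)) :
    ∃ x y z : ℝ, x < 0 ∧ 0 < y ∧ 0 < z ∧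
      ∀ lam : ℝ,
        lam ^ 3 + (d - a - e) * lam ^ 2 + (a * e - a * d - d * e - b ^ 2 - c ^ 2) * lam +
            (a * d * e + a * c ^ 2 + b ^ 2 * e) =
          (lam - x) * (lam - y) * (lam - z) := by
  have hp0 : 0 < a * d * e + a * c ^ 2 + b ^ 2 * e :=
    calc 0 < a * (d + b ^ 2 / a) * (e + c ^ 2 / (d + b ^ 2 / a)) := by positivity
      _ = a * (d + b ^ 2 / a) * e + a * c ^ 2 := by
        generalize d + b ^ 2 / a = s₁ at hs₁ ⊢
        field_simp
      _ = a * d * e + a * c ^ 2 + b ^ 2 * e := by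
        field_simp
        ring
  obtain ⟨r, har, hqr⟩ :=
    exists_root_ge_of_quadratic_nonpos (d - a) (-(a * d + b ^ 2)) a (by nlinarith)
  refine exists_neg_pos_pos_roots_of_cubic _ _ _ r hp0 (ha.trans_le har) ?_
  have hpr : r ^ 3 + (d - a - e) * r ^ 2 + (a * e - a * d - d * e - b ^ 2 - c ^ 2) * r +
      (a * d * e + a * c ^ 2 + b ^ 2 * e) = -(c ^ 2 * (r - a)) := by
    linear_combination (r - e) * hqr
  rw [hpr, neg_nonpos]
  exact mul_nonneg (sq_nonneg c) (sub_nonneg.mpr har)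

/-- Root structure of the saddle-point cubic: two positive real roots and one
negative real root. -/
theorem stmt_4 (a b c d e : ℝ) (ha : 0 < a) (hd : 0 ≤ d) (he : 0 ≤ e)
    (hs₁ : 0 < d + b ^ 2 / a) (hs₂ : 0 < e + c ^ 2 / (d + b ^ 2 / a)) :
    ∃ x y z : ℝ, x < 0 ∧ 0 < y ∧ 0 < z ∧
      ∀ lam : ℝ,
        lam ^ 3 + (d - a - e) * lam ^ 2 + (a * e - a * d - d * e - b ^ 2 - c ^ 2) * lam +
            (a * d * e + a * c ^ 2 + b ^ 2 * e) =
          (lam - x) * (lam - y) * (lam - z) :=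
  stmt_4_general a b c d e ha hs₁ hs₂
end

section
/- Upper bound on the eigenvalues of K: define q(λ) = λ³ + (μD_min − μA_max − μE_max)λ² + (μA_max·μE_max − μA_max·μD_min − μD_min·μE_max − σB_max² − σC_max²)λ + (μA_max·μD_min·μE_max + μA_max·σC_max² + σB_max²·μE_max). If ρ ∈ ℝ satisfies q(ρ) = 0 and every real root t of q satisfies t ≤ ρ (i.e., ρ is the largest real root of q), then every eigenvalue λ of K satisfies λ ≤ ρ. -/
open Matrix Filter

/-!
Suppose `K v = λ v` with `λ > ρ`. Writing
`q(t) = (t - μA_max)(t - μE_max)(t + μD_min) - σB_max²(t - μE_max) - σC_max²(t - μA_max)`,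
`q` is nonpositive at `max μA_max μE_max`, so by the intermediate value theorem
`λ > ρ ≥ μA_max, μE_max` and `q(λ) > 0`. Pairing the three block rows of `K v = λ v` with the
blocks `x, y, z` of `v` and putting `s = ⟪Bx, y⟫`, `r = ⟪Cy, z⟫` gives
`(λ - μA_max)‖x‖² ≤ s`, `(λ + μD_min)‖y‖² ≤ s + r`, `(λ - μE_max)‖z‖² ≤ r`.
With Cauchy–Schwarz the outer two yield `(λ - μA_max) s ≤ σB_max²‖y‖²` and
`(λ - μE_max) r ≤ σC_max²‖y‖²`, and together with the middle one `q(λ)‖y‖² ≤ 0`.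
So `y = 0`, whence `x` and `z` are eigenvectors of `A` and `E` for an eigenvalue above their
numerical range, hence zero.
-/

theorem le_of_nonpos_of_forall_root_le {f : ℝ → ℝ} (hf : Continuous f)
    (htop : Tendsto f atTop atTop) {ρ : ℝ} (hroots : ∀ t, f t = 0 → t ≤ ρ) {t : ℝ}
    (ht : f t ≤ 0) : t ≤ ρ := by
  obtain ⟨T, hfT, htT⟩ := ((htop.eventually_ge_atTop 0).and (eventually_ge_atTop t)).exists
  obtain ⟨c, hc, hfc⟩ := intermediate_value_Icc htT hf.continuousOn ⟨ht, hfT⟩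
  exact hc.1.trans (hroots c hfc)

theorem tendsto_cubic_atTop (b c d : ℝ) :
    Tendsto (fun t : ℝ => t ^ 3 + b * t ^ 2 + c * t + d) atTop atTop := by
  open Polynomial in
  have := tendsto_atTop_of_leadingCoeff_nonneg (C 1 * X ^ 3 + C b * X ^ 2 + C c * X + C d)
    (by rw [degree_cubic one_ne_zero]; norm_num) (by rw [leadingCoeff_cubic one_ne_zero]; norm_num)
  simpa using this

theorem mul_le_of_le_of_sq_le {a σ P Q s : ℝ} (ha : 0 ≤ a) (hP : 0 ≤ P) (hQ : 0 ≤ Q)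
    (hs : a * P ≤ s) (hs2 : s ^ 2 ≤ σ ^ 2 * P * Q) : a * s ≤ σ ^ 2 * Q := by
  obtain hs0 | hs0 := (mul_nonneg ha hP |>.trans hs).eq_or_lt
  · rw [← hs0, mul_zero]; positivity
  refine le_of_mul_le_mul_right ?_ hs0
  calc a * s * s = a * s ^ 2 := by ring
    _ ≤ a * (σ ^ 2 * P * Q) := mul_le_mul_of_nonneg_left hs2 ha
    _ = σ ^ 2 * Q * (a * P) := by ring
    _ ≤ σ ^ 2 * Q * s := mul_le_mul_of_nonneg_left hs (by positivity)

section Blocks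

variable {l m o : Type*} [Fintype l] [Fintype m] [Fintype o]

theorem dotProduct_sq_le_dotProduct_self_mul (u w : l → ℝ) :
    (u ⬝ᵥ w) ^ 2 ≤ (u ⬝ᵥ u) * (w ⬝ᵥ w) := by
  simpa only [dotProduct, pow_two] using Finset.sum_mul_sq_le_sq_mul_sq Finset.univ u w

theorem sq_mulVec_dotProduct_le {B : Matrix m l ℝ} {σ : ℝ}
    (hB : ∀ x, B *ᵥ x ⬝ᵥ B *ᵥ x ≤ σ ^ 2 * (x ⬝ᵥ x)) (x : l → ℝ) (y : m → ℝ) :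
    (B *ᵥ x ⬝ᵥ y) ^ 2 ≤ σ ^ 2 * (x ⬝ᵥ x) * (y ⬝ᵥ y) :=
  (dotProduct_sq_le_dotProduct_self_mul _ _).trans
    (mul_le_mul_of_nonneg_right (hB x) (dotProduct_self_star_nonneg y))

theorem eq_zero_of_mul_dotProduct_self_nonpos {c : ℝ} {x : l → ℝ} (hc : 0 < c)
    (h : c * (x ⬝ᵥ x) ≤ 0) : x = 0 :=
  dotProduct_self_eq_zero.1 (le_antisymm (nonpos_of_mul_nonpos_right h hc)
    (dotProduct_self_star_nonneg x))

theorem eq_zero_of_mulVec_eq_smul {A : Matrix l l ℝ} {a lam : ℝ}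
    (hA : ∀ x, x ⬝ᵥ A *ᵥ x ≤ a * (x ⬝ᵥ x)) (ha : a < lam) {x : l → ℝ}
    (hx : A *ᵥ x = lam • x) : x = 0 := by
  have h := hA x
  rw [hx, dotProduct_smul, smul_eq_mul] at h
  exact eq_zero_of_mul_dotProduct_self_nonpos (sub_pos.2 ha) (by linarith)

theorem doubleSaddle_mulVec_eq_smul_iff (A : Matrix l l ℝ) (B : Matrix m l ℝ)
    (C : Matrix o m ℝ) (D : Matrix m m ℝ) (E : Matrix o o ℝ) (lam : ℝ) (x : l → ℝ) (y : m → ℝ)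
    (z : o → ℝ) :
    fromBlocks (fromBlocks A Bᵀ B (-D)) (fromRows 0 Cᵀ) (fromCols 0 C) E *ᵥ
        Sum.elim (Sum.elim x y) z = lam • Sum.elim (Sum.elim x y) z ↔
      A *ᵥ x + Bᵀ *ᵥ y = lam • x ∧ B *ᵥ x - D *ᵥ y + Cᵀ *ᵥ z = lam • y ∧
        C *ᵥ y + E *ᵥ z = lam • z := by
  have hK : fromBlocks (fromBlocks A Bᵀ B (-D)) (fromRows 0 Cᵀ) (fromCols 0 C) E *ᵥ
      Sum.elim (Sum.elim x y) z =
        Sum.elim (Sum.elim (A *ᵥ x + Bᵀ *ᵥ y) (B *ᵥ x - D *ᵥ y + Cᵀ *ᵥ z)) (C *ᵥ y + E *ᵥ z) := by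
    ext ((i | j) | k) <;> simp [fromBlocks_mulVec, neg_mulVec, sub_eq_add_neg, add_assoc]
  have hv : lam • Sum.elim (Sum.elim x y) z =
      Sum.elim (Sum.elim (lam • x) (lam • y)) (lam • z) := by
    ext ((i | j) | k) <;> rfl
  rw [hK, hv, Sum.elim_eq_iff, Sum.elim_eq_iff, and_assoc]

theorem cubic_mul_dotProduct_self_nonpos {A : Matrix l l ℝ} {B : Matrix m l ℝ}
    {C : Matrix o m ℝ} {D : Matrix m m ℝ} {E : Matrix o o ℝ} {a δ e β γ lam : ℝ}
    (hA : ∀ x, x ⬝ᵥ A *ᵥ x ≤ a * (x ⬝ᵥ x)) (hD : ∀ y, δ * (y ⬝ᵥ y) ≤ y ⬝ᵥ D *ᵥ y)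
    (hE : ∀ z, z ⬝ᵥ E *ᵥ z ≤ e * (z ⬝ᵥ z))
    (hB : ∀ x, B *ᵥ x ⬝ᵥ B *ᵥ x ≤ β ^ 2 * (x ⬝ᵥ x))
    (hC : ∀ y, C *ᵥ y ⬝ᵥ C *ᵥ y ≤ γ ^ 2 * (y ⬝ᵥ y)) (ha : a ≤ lam) (he : e ≤ lam)
    {x : l → ℝ} {y : m → ℝ} {z : o → ℝ} (hx : A *ᵥ x + Bᵀ *ᵥ y = lam • x)
    (hy : B *ᵥ x - D *ᵥ y + Cᵀ *ᵥ z = lam • y) (hz : C *ᵥ y + E *ᵥ z = lam • z) :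
    ((lam - a) * (lam - e) * (lam + δ) - β ^ 2 * (lam - e) - γ ^ 2 * (lam - a)) * (y ⬝ᵥ y)
      ≤ 0 := by
  set s := B *ᵥ x ⬝ᵥ y
  set r := C *ᵥ y ⬝ᵥ z
  have hxx : 0 ≤ x ⬝ᵥ x := dotProduct_self_star_nonneg x
  have hyy : 0 ≤ y ⬝ᵥ y := dotProduct_self_star_nonneg y
  have hzz : 0 ≤ z ⬝ᵥ z := dotProduct_self_star_nonneg z
  have hxs : (lam - a) * (x ⬝ᵥ x) ≤ s := by
    have h := congrArg (x ⬝ᵥ ·) hx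
    simp only [dotProduct_add, dotProduct_smul, smul_eq_mul, dotProduct_mulVec x Bᵀ,
      vecMul_transpose] at h
    linarith [hA x]
  have hysr : (lam + δ) * (y ⬝ᵥ y) ≤ s + r := by
    have h := congrArg (y ⬝ᵥ ·) hy
    simp only [dotProduct_add, dotProduct_sub, dotProduct_smul, smul_eq_mul,
      dotProduct_mulVec y Cᵀ, vecMul_transpose, dotProduct_comm y (B *ᵥ x)] at h
    linarith [hD y]
  have hzr : (lam - e) * (z ⬝ᵥ z) ≤ r := by
    have h := congrArg (z ⬝ᵥ ·) hz
    simp only [dotProduct_add, dotProduct_smul, smul_eq_mul, dotProduct_comm z (C *ᵥ y)] at h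
    linarith [hE z]
  have hs := mul_le_of_le_of_sq_le (sub_nonneg.2 ha) hxx hyy hxs (sq_mulVec_dotProduct_le hB x y)
  have hr := mul_le_of_le_of_sq_le (sub_nonneg.2 he) hzz hyy hzr
    ((sq_mulVec_dotProduct_le hC y z).trans_eq (by ring))
  have hae : 0 ≤ (lam - a) * (lam - e) := mul_nonneg (sub_nonneg.2 ha) (sub_nonneg.2 he)
  linarith [mul_le_mul_of_nonneg_left hysr hae, mul_le_mul_of_nonneg_left hs (sub_nonneg.2 he),
    mul_le_mul_of_nonneg_left hr (sub_nonneg.2 ha)]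

end Blocks

theorem stmt_5_general (n m p : ℕ)
    (A : Matrix (Fin n) (Fin n) ℝ) (B : Matrix (Fin m) (Fin n) ℝ)
    (C : Matrix (Fin p) (Fin m) ℝ) (D : Matrix (Fin m) (Fin m) ℝ)
    (E : Matrix (Fin p) (Fin p) ℝ)
    (K : Matrix ((Fin n ⊕ Fin m) ⊕ Fin p) ((Fin n ⊕ Fin m) ⊕ Fin p) ℝ)
    (hK : K = fromBlocks (fromBlocks A Bᵀ B (-D)) (fromRows 0 Cᵀ) (fromCols 0 C) E)
    -- spectral parameters
    (μAmin μAmax μDmin μDmax μEmin μEmax σBmax σCmax : ℝ)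
    (hAbnd : ∀ x : Fin n → ℝ,
      μAmin * (x ⬝ᵥ x) ≤ x ⬝ᵥ A.mulVec x ∧ x ⬝ᵥ A.mulVec x ≤ μAmax * (x ⬝ᵥ x))
    (hDbnd : ∀ y : Fin m → ℝ,
      μDmin * (y ⬝ᵥ y) ≤ y ⬝ᵥ D.mulVec y ∧ y ⬝ᵥ D.mulVec y ≤ μDmax * (y ⬝ᵥ y))
    (hEbnd : ∀ z : Fin p → ℝ,
      μEmin * (z ⬝ᵥ z) ≤ z ⬝ᵥ E.mulVec z ∧ z ⬝ᵥ E.mulVec z ≤ μEmax * (z ⬝ᵥ z))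
    (hBmax : ∀ x : Fin n → ℝ, B.mulVec x ⬝ᵥ B.mulVec x ≤ σBmax ^ 2 * (x ⬝ᵥ x))
    (hCmax : ∀ y : Fin m → ℝ, C.mulVec y ⬝ᵥ C.mulVec y ≤ σCmax ^ 2 * (y ⬝ᵥ y))
    -- ρ is the largest real root of q
    (ρ : ℝ)
    (hρmax : ∀ t : ℝ,
      t ^ 3 + (μDmin - μAmax - μEmax) * t ^ 2 +
          (μAmax * μEmax - μAmax * μDmin - μDmin * μEmax - σBmax ^ 2 - σCmax ^ 2) * t +
          (μAmax * μDmin * μEmax + μAmax * σCmax ^ 2 + σBmax ^ 2 * μEmax) = 0 → t ≤ ρ) :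
    ∀ (lam : ℝ) (v : (Fin n ⊕ Fin m) ⊕ Fin p → ℝ), v ≠ 0 → K.mulVec v = lam • v →
      lam ≤ ρ := by
  intro lam v hv hKv
  have hq : ∀ t, (t - μAmax) * (t - μEmax) * (t + μDmin) - σBmax ^ 2 * (t - μEmax)
      - σCmax ^ 2 * (t - μAmax) ≤ 0 → t ≤ ρ := fun t ht =>
    le_of_nonpos_of_forall_root_le (by fun_prop) (tendsto_cubic_atTop _ _ _) hρmax (by linarith)
  have hρ : μAmax ≤ ρ ∧ μEmax ≤ ρ := by
    rcases le_total μAmax μEmax with h | h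
    · have hE : μEmax ≤ ρ := hq _ (by nlinarith [sq_nonneg σCmax])
      exact ⟨h.trans hE, hE⟩
    · have hA : μAmax ≤ ρ := hq _ (by nlinarith [sq_nonneg σBmax])
      exact ⟨hA, h.trans hA⟩
  by_contra! hlt
  obtain ⟨x, y, z, rfl⟩ : ∃ x y z, v = Sum.elim (Sum.elim x y) z :=
    ⟨v ∘ Sum.inl ∘ Sum.inl, v ∘ Sum.inl ∘ Sum.inr, v ∘ Sum.inr, by ext ((i | j) | k) <;> rfl⟩
  rw [hK, doubleSaddle_mulVec_eq_smul_iff] at hKv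
  obtain ⟨hx, hy, hz⟩ := hKv
  have hAlam : μAmax < lam := hρ.1.trans_lt hlt
  have hElam : μEmax < lam := hρ.2.trans_lt hlt
  have hy0 : y = 0 :=
    eq_zero_of_mul_dotProduct_self_nonpos (not_le.1 fun h => hlt.not_ge (hq lam h))
      (cubic_mul_dotProduct_self_nonpos (fun x => (hAbnd x).2) (fun y => (hDbnd y).1)
        (fun z => (hEbnd z).2) hBmax hCmax hAlam.le hElam.le hx hy hz)
  subst hy0
  have hx0 : x = 0 := eq_zero_of_mulVec_eq_smul (fun x => (hAbnd x).2) hAlam (by simpa using hx)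
  have hz0 : z = 0 := eq_zero_of_mulVec_eq_smul (fun z => (hEbnd z).2) hElam (by simpa using hz)
  exact hv (by rw [hx0, hz0, Sum.elim_zero_zero, Sum.elim_zero_zero])

/-- Upper bound on the eigenvalues of the double saddle-point matrix `K`:
every eigenvalue is at most the largest real root of the cubic `q`. -/
theorem stmt_5 (n m p : ℕ) (hn : 0 < n) (hm : 0 < m) (hp : 0 < p)
    (A : Matrix (Fin n) (Fin n) ℝ) (B : Matrix (Fin m) (Fin n) ℝ)
    (C : Matrix (Fin p) (Fin m) ℝ) (D : Matrix (Fin m) (Fin m) ℝ)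
    (E : Matrix (Fin p) (Fin p) ℝ)
    (hA : A.PosDef) (hD : D.PosSemidef) (hE : E.PosSemidef)
    (S₁ : Matrix (Fin m) (Fin m) ℝ) (hS₁ : S₁ = D + B * A⁻¹ * Bᵀ)
    (S₂ : Matrix (Fin p) (Fin p) ℝ) (hS₂ : S₂ = E + C * S₁⁻¹ * Cᵀ)
    (hS₁pd : S₁.PosDef) (hS₂pd : S₂.PosDef)
    (K : Matrix ((Fin n ⊕ Fin m) ⊕ Fin p) ((Fin n ⊕ Fin m) ⊕ Fin p) ℝ)
    (hK : K = fromBlocks (fromBlocks A Bᵀ B (-D)) (fromRows 0 Cᵀ) (fromCols 0 C) E)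
    -- spectral parameters
    (μAmin μAmax μDmin μDmax μEmin μEmax σBmax σBmin σCmax σCmin : ℝ)
    (hμA0 : 0 < μAmin) (hμA : μAmin ≤ μAmax)
    (hAbnd : ∀ x : Fin n → ℝ,
      μAmin * (x ⬝ᵥ x) ≤ x ⬝ᵥ A.mulVec x ∧ x ⬝ᵥ A.mulVec x ≤ μAmax * (x ⬝ᵥ x))
    (hμD0 : 0 ≤ μDmin) (hμD : μDmin ≤ μDmax)
    (hDbnd : ∀ y : Fin m → ℝ,
      μDmin * (y ⬝ᵥ y) ≤ y ⬝ᵥ D.mulVec y ∧ y ⬝ᵥ D.mulVec y ≤ μDmax * (y ⬝ᵥ y))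
    (hμE0 : 0 ≤ μEmin) (hμE : μEmin ≤ μEmax)
    (hEbnd : ∀ z : Fin p → ℝ,
      μEmin * (z ⬝ᵥ z) ≤ z ⬝ᵥ E.mulVec z ∧ z ⬝ᵥ E.mulVec z ≤ μEmax * (z ⬝ᵥ z))
    (hσBmax : 0 < σBmax)
    (hBmax : ∀ x : Fin n → ℝ, B.mulVec x ⬝ᵥ B.mulVec x ≤ σBmax ^ 2 * (x ⬝ᵥ x))
    (hσBmin : 0 ≤ σBmin)
    (hBmin : ∀ y : Fin m → ℝ, σBmin ^ 2 * (y ⬝ᵥ y) ≤ Bᵀ.mulVec y ⬝ᵥ Bᵀ.mulVec y)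
    (hσCmax : 0 < σCmax)
    (hCmax : ∀ y : Fin m → ℝ, C.mulVec y ⬝ᵥ C.mulVec y ≤ σCmax ^ 2 * (y ⬝ᵥ y))
    (hσCmin : 0 ≤ σCmin)
    (hCmin : ∀ z : Fin p → ℝ, σCmin ^ 2 * (z ⬝ᵥ z) ≤ Cᵀ.mulVec z ⬝ᵥ Cᵀ.mulVec z)
    -- ρ is the largest real root of q
    (ρ : ℝ)
    (hρroot : ρ ^ 3 + (μDmin - μAmax - μEmax) * ρ ^ 2 +
        (μAmax * μEmax - μAmax * μDmin - μDmin * μEmax - σBmax ^ 2 - σCmax ^ 2) * ρ +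
        (μAmax * μDmin * μEmax + μAmax * σCmax ^ 2 + σBmax ^ 2 * μEmax) = 0)
    (hρmax : ∀ t : ℝ,
      t ^ 3 + (μDmin - μAmax - μEmax) * t ^ 2 +
          (μAmax * μEmax - μAmax * μDmin - μDmin * μEmax - σBmax ^ 2 - σCmax ^ 2) * t +
          (μAmax * μDmin * μEmax + μAmax * σCmax ^ 2 + σBmax ^ 2 * μEmax) = 0 → t ≤ ρ) :
    ∀ (lam : ℝ) (v : (Fin n ⊕ Fin m) ⊕ Fin p → ℝ), v ≠ 0 → K.mulVec v = lam • v →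
      lam ≤ ρ :=
  stmt_5_general n m p A B C D E K hK μAmin μAmax μDmin μDmax μEmin μEmax σBmax σCmax hAbnd hDbnd
    hEbnd hBmax hCmax ρ hρmax
end

section
/- Upper bound on the negative eigenvalues of K: every negative eigenvalue λ of K satisfies λ ≤ (μA_max − √(μA_max² + 4·σB_min²)) / 2. -/
/-!
Write an eigenvector as `v = (x, y, z)`. If `y = 0`, the first and last block rows make `x` and `z`
eigenvectors of the semidefinite matrices `A` and `E` for the negative eigenvalue `λ`, so `v = 0`.
Otherwise, testing the second and third block rows against `y` and `z` gives `yᵀBx ≥ λ‖y‖²`, while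
the first row says `(A - λ)x = -Bᵀy`. Since `0 ≤ A - λ ≤ μ_max - λ`,
`‖Bᵀy‖² = ‖(A - λ)x‖² ≤ (μ_max - λ) xᵀ(A - λ)x = -(μ_max - λ) yᵀBx ≤ -(μ_max - λ) λ ‖y‖²`,
so `σ² ≤ λ² - μ_max λ` and `λ` lies below the negative root of `t² - μ_max t - σ²`.
-/

open Matrix

open scoped MatrixOrder

namespace Matrix

variable {ι κ : Type*} [Fintype ι] [Fintype κ]

lemma dotProduct_mulVec_comm_of_transpose_eq {Q : Matrix ι ι ℝ} (hQ : Qᵀ = Q) (u w : ι → ℝ) :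
    u ⬝ᵥ Q *ᵥ w = Q *ᵥ u ⬝ᵥ w := by
  rw [dotProduct_mulVec, ← mulVec_transpose, hQ]

lemma dotProduct_mulVec_transpose (M : Matrix κ ι ℝ) (u : κ → ℝ) (w : ι → ℝ) :
    w ⬝ᵥ Mᵀ *ᵥ u = u ⬝ᵥ M *ᵥ w := by
  rw [mulVec_transpose, dotProduct_comm, dotProduct_mulVec]

lemma PosSemidef.eq_zero_of_mulVec_eq_smul_of_neg {M : Matrix ι ι ℝ} (hM : M.PosSemidef)
    {lam : ℝ} {w : ι → ℝ} (hw : M *ᵥ w = lam • w) (hlam : lam < 0) : w = 0 := by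
  have hMw : 0 ≤ lam * (w ⬝ᵥ w) := by
    simpa [hw] using hM.dotProduct_mulVec_nonneg w
  have hww : w ⬝ᵥ w = 0 :=
    le_antisymm (nonpos_of_mul_nonneg_right hMw hlam) (dotProduct_self_star_nonneg w)
  exact dotProduct_self_eq_zero.mp hww

lemma PosSemidef.mulVec_dotProduct_mulVec_le [DecidableEq ι] {P : Matrix ι ι ℝ}
    (hP : P.PosSemidef) {c : ℝ} (hc : ∀ w, w ⬝ᵥ P *ᵥ w ≤ c * (w ⬝ᵥ w)) (x : ι → ℝ) :
    P *ᵥ x ⬝ᵥ P *ᵥ x ≤ c * (x ⬝ᵥ P *ᵥ x) := by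
  set Q := CFC.sqrt P
  have hQQ : Q * Q = P := CFC.sqrt_mul_sqrt_self P hP.nonneg
  have hQ : Qᵀ = Q := IsSymm.eq (CFC.sqrt_nonneg P).isSelfAdjoint
  calc P *ᵥ x ⬝ᵥ P *ᵥ x = Q *ᵥ (Q *ᵥ x) ⬝ᵥ Q *ᵥ (Q *ᵥ x) := by rw [mulVec_mulVec, hQQ]
    _ = Q *ᵥ x ⬝ᵥ P *ᵥ (Q *ᵥ x) := by
        rw [← dotProduct_mulVec_comm_of_transpose_eq hQ, mulVec_mulVec (Q *ᵥ x), hQQ]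
    _ ≤ c * (Q *ᵥ x ⬝ᵥ Q *ᵥ x) := hc _
    _ = c * (x ⬝ᵥ P *ᵥ x) := by
        rw [← dotProduct_mulVec_comm_of_transpose_eq hQ, mulVec_mulVec, hQQ]

variable {R : Type*} [Ring R] {n m p : Type*} [Fintype n] [Fintype m] [Fintype p]

lemma fromBlocks_fromBlocks_mulVec_sumElim (A : Matrix n n R) (B : Matrix m n R)
    (C : Matrix p m R) (D : Matrix m m R) (E : Matrix p p R) (x : n → R) (y : m → R)
    (z : p → R) :
    fromBlocks (fromBlocks A Bᵀ B (-D)) (fromRows 0 Cᵀ) (fromCols 0 C) E *ᵥ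
        Sum.elim (Sum.elim x y) z =
      Sum.elim (Sum.elim (A *ᵥ x + Bᵀ *ᵥ y) (B *ᵥ x - D *ᵥ y + Cᵀ *ᵥ z)) (C *ᵥ y + E *ᵥ z) := by
  simp only [fromBlocks_mulVec, fromRows_mulVec, fromCols_mulVec_sumElim, Sum.elim_comp_inl,
    Sum.elim_comp_inr, zero_mulVec, neg_mulVec, ← Sum.elim_add_add, add_zero, zero_add,
    sub_eq_add_neg, add_right_comm (B *ᵥ x)]

section SaddlePoint

variable {A : Matrix n n ℝ} {B : Matrix m n ℝ} {C : Matrix p m ℝ} {D : Matrix m m ℝ}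
  {E : Matrix p p ℝ} {lam : ℝ} {x : n → ℝ} {y : m → ℝ} {z : p → ℝ}

lemma mul_dotProduct_self_le_dotProduct_mulVec (hD : D.PosSemidef) (hE : E.PosSemidef)
    (hlam : lam ≤ 0) (h₂ : B *ᵥ x - D *ᵥ y + Cᵀ *ᵥ z = lam • y)
    (h₃ : C *ᵥ y + E *ᵥ z = lam • z) :
    lam * (y ⬝ᵥ y) ≤ y ⬝ᵥ B *ᵥ x := by
  have hy := congrArg (y ⬝ᵥ ·) h₂
  have hz := congrArg (z ⬝ᵥ ·) h₃
  simp only [dotProduct_add, dotProduct_sub, dotProduct_smul, smul_eq_mul,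
    dotProduct_mulVec_transpose] at hy hz
  have hDy : 0 ≤ y ⬝ᵥ D *ᵥ y := by simpa using hD.dotProduct_mulVec_nonneg y
  have hEz : 0 ≤ z ⬝ᵥ E *ᵥ z := by simpa using hE.dotProduct_mulVec_nonneg z
  have hzz : 0 ≤ z ⬝ᵥ z := dotProduct_self_star_nonneg z
  nlinarith

lemma transpose_mulVec_dotProduct_le [DecidableEq n] (hA : A.PosSemidef) {μ : ℝ}
    (hμ : ∀ w, w ⬝ᵥ A *ᵥ w ≤ μ * (w ⬝ᵥ w)) (hlam : lam ≤ 0)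
    (h₁ : A *ᵥ x + Bᵀ *ᵥ y = lam • x) :
    Bᵀ *ᵥ y ⬝ᵥ Bᵀ *ᵥ y ≤ (μ - lam) * -(y ⬝ᵥ B *ᵥ x) := by
  set P := A - lam • (1 : Matrix n n ℝ) with hPdef
  have hP : P.PosSemidef := by
    rw [hPdef, sub_eq_add_neg, ← neg_smul]
    exact hA.add (PosSemidef.one.smul (neg_nonneg.mpr hlam))
  have hPmulVec : ∀ w, P *ᵥ w = A *ᵥ w - lam • w := fun w => by
    rw [sub_mulVec, smul_mulVec, one_mulVec]
  have hPx : P *ᵥ x = -(Bᵀ *ᵥ y) := by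
    rw [hPmulVec, ← h₁]
    abel
  have hPμ : ∀ w, w ⬝ᵥ P *ᵥ w ≤ (μ - lam) * (w ⬝ᵥ w) := fun w => by
    rw [hPmulVec, dotProduct_sub, dotProduct_smul, smul_eq_mul]
    linarith [hμ w]
  simpa [hPx, dotProduct_mulVec_transpose] using hP.mulVec_dotProduct_mulVec_le hPμ x

end SaddlePoint

end Matrix

lemma le_half_sub_sqrt_of_le_mul {lam μ s : ℝ} (hlam : lam ≤ 0) (hμ : 0 ≤ μ)
    (h : s ≤ (μ - lam) * -lam) : lam ≤ (μ - √(μ ^ 2 + 4 * s)) / 2 := by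
  have : √(μ ^ 2 + 4 * s) ≤ μ - 2 * lam :=
    Real.sqrt_le_iff.mpr ⟨by linarith, by nlinarith⟩
  linarith

theorem stmt_7_general (n m p : ℕ)
    (A : Matrix (Fin n) (Fin n) ℝ) (B : Matrix (Fin m) (Fin n) ℝ)
    (C : Matrix (Fin p) (Fin m) ℝ) (D : Matrix (Fin m) (Fin m) ℝ)
    (E : Matrix (Fin p) (Fin p) ℝ)
    (hA : A.PosDef) (hD : D.PosSemidef) (hE : E.PosSemidef)
    (K : Matrix ((Fin n ⊕ Fin m) ⊕ Fin p) ((Fin n ⊕ Fin m) ⊕ Fin p) ℝ)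
    (hK : K = fromBlocks (fromBlocks A Bᵀ B (-D)) (fromRows 0 Cᵀ) (fromCols 0 C) E)
    (μAmin μAmax σBmin : ℝ)
    (hμA0 : 0 < μAmin) (hμA : μAmin ≤ μAmax)
    (hAbnd : ∀ x : Fin n → ℝ,
      μAmin * (x ⬝ᵥ x) ≤ x ⬝ᵥ A.mulVec x ∧ x ⬝ᵥ A.mulVec x ≤ μAmax * (x ⬝ᵥ x))
    (hBmin : ∀ y : Fin m → ℝ, σBmin ^ 2 * (y ⬝ᵥ y) ≤ Bᵀ.mulVec y ⬝ᵥ Bᵀ.mulVec y) :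
    ∀ (lam : ℝ) (v : (Fin n ⊕ Fin m) ⊕ Fin p → ℝ), v ≠ 0 → K.mulVec v = lam • v →
      lam < 0 → lam ≤ (μAmax - Real.sqrt (μAmax ^ 2 + 4 * σBmin ^ 2)) / 2 := by
  intro lam v hv hKv hlam
  obtain ⟨xy, z, rfl⟩ : ∃ xy z, v = Sum.elim xy z := ⟨_, _, (Sum.elim_comp_inl_inr v).symm⟩
  obtain ⟨x, y, rfl⟩ : ∃ x y, xy = Sum.elim x y := ⟨_, _, (Sum.elim_comp_inl_inr xy).symm⟩
  rw [hK, fromBlocks_fromBlocks_mulVec_sumElim] at hKv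
  have h₁ : A *ᵥ x + Bᵀ *ᵥ y = lam • x := funext fun i => congrFun hKv (.inl (.inl i))
  have h₂ : B *ᵥ x - D *ᵥ y + Cᵀ *ᵥ z = lam • y := funext fun i => congrFun hKv (.inl (.inr i))
  have h₃ : C *ᵥ y + E *ᵥ z = lam • z := funext fun i => congrFun hKv (.inr i)
  have hy : y ≠ 0 := by
    rintro rfl
    have hx := hA.posSemidef.eq_zero_of_mulVec_eq_smul_of_neg (by simpa using h₁) hlam
    have hz := hE.eq_zero_of_mulVec_eq_smul_of_neg (by simpa using h₃) hlam
    exact hv (by simp [hx, hz])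
  have hyy : 0 < y ⬝ᵥ y :=
    lt_of_le_of_ne (dotProduct_self_star_nonneg y) (Ne.symm (dotProduct_self_eq_zero.not.mpr hy))
  have hμ : 0 ≤ μAmax - lam := by linarith
  refine le_half_sub_sqrt_of_le_mul hlam.le (by linarith) (le_of_mul_le_mul_right ?_ hyy)
  calc σBmin ^ 2 * (y ⬝ᵥ y) ≤ Bᵀ *ᵥ y ⬝ᵥ Bᵀ *ᵥ y := hBmin y
    _ ≤ (μAmax - lam) * -(y ⬝ᵥ B *ᵥ x) :=
      transpose_mulVec_dotProduct_le hA.posSemidef (fun w => (hAbnd w).2) hlam.le h₁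
    _ ≤ (μAmax - lam) * -lam * (y ⬝ᵥ y) := by
      rw [mul_assoc]
      gcongr
      linarith [mul_dotProduct_self_le_dotProduct_mulVec hD hE hlam.le h₂ h₃]

/-- Upper bound on the negative eigenvalues of the double saddle-point matrix `K`. -/
theorem stmt_7 (n m p : ℕ) (hn : 0 < n) (hm : 0 < m) (hp : 0 < p)
    (A : Matrix (Fin n) (Fin n) ℝ) (B : Matrix (Fin m) (Fin n) ℝ)
    (C : Matrix (Fin p) (Fin m) ℝ) (D : Matrix (Fin m) (Fin m) ℝ)
    (E : Matrix (Fin p) (Fin p) ℝ)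
    (hA : A.PosDef) (hD : D.PosSemidef) (hE : E.PosSemidef)
    (S₁ : Matrix (Fin m) (Fin m) ℝ) (hS₁ : S₁ = D + B * A⁻¹ * Bᵀ)
    (S₂ : Matrix (Fin p) (Fin p) ℝ) (hS₂ : S₂ = E + C * S₁⁻¹ * Cᵀ)
    (hS₁pd : S₁.PosDef) (hS₂pd : S₂.PosDef)
    (K : Matrix ((Fin n ⊕ Fin m) ⊕ Fin p) ((Fin n ⊕ Fin m) ⊕ Fin p) ℝ)
    (hK : K = fromBlocks (fromBlocks A Bᵀ B (-D)) (fromRows 0 Cᵀ) (fromCols 0 C) E)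
    (μAmin μAmax σBmin : ℝ)
    (hμA0 : 0 < μAmin) (hμA : μAmin ≤ μAmax)
    (hAbnd : ∀ x : Fin n → ℝ,
      μAmin * (x ⬝ᵥ x) ≤ x ⬝ᵥ A.mulVec x ∧ x ⬝ᵥ A.mulVec x ≤ μAmax * (x ⬝ᵥ x))
    (hσBmin : 0 ≤ σBmin)
    (hBmin : ∀ y : Fin m → ℝ, σBmin ^ 2 * (y ⬝ᵥ y) ≤ Bᵀ.mulVec y ⬝ᵥ Bᵀ.mulVec y) :
    ∀ (lam : ℝ) (v : (Fin n ⊕ Fin m) ⊕ Fin p → ℝ), v ≠ 0 → K.mulVec v = lam • v →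
      lam < 0 → lam ≤ (μAmax - Real.sqrt (μAmax ^ 2 + 4 * σBmin ^ 2)) / 2 :=
  stmt_7_general n m p A B C D E hA hD hE K hK μAmin μAmax σBmin hμA0 hμA hAbnd hBmin
end

section
/- Eigenvalue localization for the preconditioned matrix when D = 0: let g(λ) = λ³ − λ² − 2λ + 1 and let ζ⁻ < 0 < ζ₁ < ζ₂ be real numbers with g(ζ⁻) = g(ζ₁) = g(ζ₂) = 0 (the three real roots of g). Assume D = 0. Then every eigenvalue λ of M⁻¹K lies in [ζ⁻, (1 − √5)/2] ∪ [ζ₁, 1] ∪ [(1 + √5)/2, ζ₂]. -/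
/-!
With `D = 0` the first block equation gives `S₁ y = (λ - 1) B x`. Eliminating `x` and `y` leaves
`(λ² - λ - 1) S₁ y = (λ - 1) Cᵀ z`, and testing the last block equation against `z` gives
`λ (2 - λ) a = q(λ) s`, where `q(λ) = (λ - 1)(λ² - λ - 1)`, `a = zᵀ C S₁⁻¹ Cᵀ z` and
`s = zᵀ S₂ z ≥ a`. Since `q(λ) - λ (2 - λ) = g(λ)`, this forces `q(λ) g(λ) ≤ 0`; when `z = 0`
already `q(λ) = 0`. The roots `ψ < 1 < φ` of `q` interlace with the roots of `g`, so `q g ≤ 0`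
holds exactly on `[ζ⁻, ψ] ∪ [ζ₁, 1] ∪ [φ, ζ₂]`.
-/

open Matrix

theorem cubic_eq_prod_sub_of_roots {K : Type*} [Field K] {u v w a b c : K}
    (hab : a ≠ b) (hac : a ≠ c) (hbc : b ≠ c)
    (ha : a ^ 3 + u * a ^ 2 + v * a + w = 0) (hb : b ^ 3 + u * b ^ 2 + v * b + w = 0)
    (hc : c ^ 3 + u * c ^ 2 + v * c + w = 0) (x : K) :
    x ^ 3 + u * x ^ 2 + v * x + w = (x - a) * (x - b) * (x - c) := by
  have hab' : a ^ 2 + a * b + b ^ 2 + u * (a + b) + v = 0 := by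
    refine (mul_eq_zero.1 ?_).resolve_left (sub_ne_zero.2 hab)
    linear_combination ha - hb
  have hac' : a ^ 2 + a * c + c ^ 2 + u * (a + c) + v = 0 := by
    refine (mul_eq_zero.1 ?_).resolve_left (sub_ne_zero.2 hac)
    linear_combination ha - hc
  have e₁ : a + b + c = -u := by
    refine eq_neg_of_add_eq_zero_left <| (mul_eq_zero.1 ?_).resolve_left (sub_ne_zero.2 hbc)
    linear_combination hab' - hac'
  have e₂ : a * b + a * c + b * c = v := by linear_combination (a + b) * e₁ - hab'
  have e₃ : a * b * c = -w := by linear_combination hc - c ^ 2 * e₁ + c * e₂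
  linear_combination x ^ 2 * e₁ - x * e₂ + e₃

theorem mul_sub_pos_of_notMem_Icc {α : Type*} [Ring α] [LinearOrder α] [IsStrictOrderedRing α]
    {a b x : α} (hab : a ≤ b) (hx : x ∉ Set.Icc a b) :
    0 < (x - a) * (x - b) := by
  rw [Set.mem_Icc, not_and_or, not_le, not_le] at hx
  rcases hx with hxa | hbx
  · exact mul_pos_of_neg_of_neg (sub_neg.2 hxa) (sub_neg.2 (hxa.trans_le hab))
  · exact mul_pos (sub_pos.2 (hab.trans_lt hbx)) (sub_pos.2 hbx)

theorem mem_Icc_or_of_mul_nonpos {α : Type*} [Ring α] [LinearOrder α] [IsStrictOrderedRing α]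
    {x a₁ b₁ a₂ b₂ a₃ b₃ : α}
    (h₁ : a₁ ≤ b₁) (h₂ : a₂ ≤ b₂) (h₃ : a₃ ≤ b₃)
    (h : (x - a₁) * (x - b₁) * ((x - a₂) * (x - b₂)) * ((x - a₃) * (x - b₃)) ≤ 0) :
    x ∈ Set.Icc a₁ b₁ ∨ x ∈ Set.Icc a₂ b₂ ∨ x ∈ Set.Icc a₃ b₃ := by
  by_contra! hx
  obtain ⟨hx₁, hx₂, hx₃⟩ := hx
  exact h.not_gt <| mul_pos (mul_pos (mul_sub_pos_of_notMem_Icc h₁ hx₁)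
    (mul_sub_pos_of_notMem_Icc h₂ hx₂)) (mul_sub_pos_of_notMem_Icc h₃ hx₃)

section Cubic

open Real

variable {ζneg ζ₁ ζ₂ : ℝ} (h₁ : ζneg < 0) (h₂ : 0 < ζ₁) (h₃ : ζ₁ < ζ₂)
    (hgneg : ζneg ^ 3 - ζneg ^ 2 - 2 * ζneg + 1 = 0)
    (hg₁ : ζ₁ ^ 3 - ζ₁ ^ 2 - 2 * ζ₁ + 1 = 0)
    (hg₂ : ζ₂ ^ 3 - ζ₂ ^ 2 - 2 * ζ₂ + 1 = 0)
include h₁ h₂ h₃ hgneg hg₁ hg₂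

theorem cubic_eq_prod_sub_roots (x : ℝ) :
    x ^ 3 - x ^ 2 - 2 * x + 1 = (x - ζneg) * (x - ζ₁) * (x - ζ₂) := by
  have := cubic_eq_prod_sub_of_roots (u := -1) (v := -2) (w := 1) (h₁.trans h₂).ne
    (h₁.trans (h₂.trans h₃)).ne h₃.ne (by linear_combination hgneg) (by linear_combination hg₁)
    (by linear_combination hg₂) x
  linear_combination this

-- The cubic takes the values `φ > 0`, `-1` and `ψ < 0` at the roots `ψ`, `1`, `φ` of
-- `(λ - 1)(λ² - λ - 1)`.
theorem cubic_roots_interlace : ζneg ≤ goldenConj ∧ ζ₁ ≤ 1 ∧ goldenRatio ≤ ζ₂ := by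
  have hg := cubic_eq_prod_sub_roots h₁ h₂ h₃ hgneg hg₁ hg₂
  refine ⟨?_, ?_, ?_⟩ <;> by_contra! hlt
  · have hψ : goldenConj ^ 3 - goldenConj ^ 2 - 2 * goldenConj + 1 = goldenRatio := by
      linear_combination goldenConj * goldenConj_sq - goldenRatio_add_goldenConj
    have := mul_neg_of_pos_of_neg (mul_pos_of_neg_of_neg (sub_neg.2 hlt)
      (sub_neg.2 (goldenConj_neg.trans h₂))) (sub_neg.2 (goldenConj_neg.trans (h₂.trans h₃)))
    linarith [hg goldenConj, goldenRatio_pos]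
  · have := mul_pos_of_neg_of_neg
      (mul_neg_of_pos_of_neg (sub_pos.2 (h₁.trans one_pos)) (sub_neg.2 hlt))
      (sub_neg.2 (hlt.trans h₃))
    linarith [hg 1]
  · have hφ : goldenRatio ^ 3 - goldenRatio ^ 2 - 2 * goldenRatio + 1 = goldenConj := by
      linear_combination goldenRatio * goldenRatio_sq - goldenRatio_add_goldenConj
    have := mul_pos (mul_pos (sub_pos.2 (h₁.trans goldenRatio_pos))
      (sub_pos.2 (h₃.trans hlt))) (sub_pos.2 hlt)
    linarith [hg goldenRatio, goldenConj_neg]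

theorem mem_localization_of_mul_cubic_nonpos {lam : ℝ}
    (h : (lam - 1) * (lam ^ 2 - lam - 1) * (lam ^ 3 - lam ^ 2 - 2 * lam + 1) ≤ 0) :
    (ζneg ≤ lam ∧ lam ≤ goldenConj) ∨ (ζ₁ ≤ lam ∧ lam ≤ 1) ∨
      (goldenRatio ≤ lam ∧ lam ≤ ζ₂) := by
  obtain ⟨hi₁, hi₂, hi₃⟩ := cubic_roots_interlace h₁ h₂ h₃ hgneg hg₁ hg₂
  have hq : lam ^ 2 - lam - 1 = (lam - goldenConj) * (lam - goldenRatio) := by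
    linear_combination lam * goldenRatio_add_goldenConj - goldenRatio_mul_goldenConj
  rw [hq, cubic_eq_prod_sub_roots h₁ h₂ h₃ hgneg hg₁ hg₂] at h
  exact mem_Icc_or_of_mul_nonpos hi₁ hi₂ hi₃ (by linear_combination h)

end Cubic

theorem mul_sub_nonpos_of_mul_eq_mul {α : Type*} [CommRing α] [LinearOrder α]
    [IsStrictOrderedRing α] {q r a s : α} (hs : 0 < s) (ha : 0 ≤ a) (has : a ≤ s)
    (h : r * a = q * s) : q * (q - r) ≤ 0 := by
  have hscaled : q * (q - r) * s ^ 2 = r ^ 2 * a * (a - s) := by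
    linear_combination (-(q * s + r * a - r * s)) * h
  refine nonpos_of_mul_nonpos_left ?_ (pow_pos hs 2)
  rw [hscaled]
  exact mul_nonpos_of_nonneg_of_nonpos (by positivity) (sub_nonpos.2 has)

section Blocks

variable {ι κ τ : Type*} [Fintype ι] [Fintype κ] [Fintype τ]
  {x : ι → ℝ} {y : κ → ℝ} {z : τ → ℝ} {lam : ℝ}

theorem block_equations_of_mulVec_eq_smul {A : Matrix ι ι ℝ} {B : Matrix κ ι ℝ}
    {C : Matrix τ κ ℝ} {D S₁ : Matrix κ κ ℝ} {E S₂ : Matrix τ τ ℝ}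
    (h : fromBlocks (fromBlocks A Bᵀ B (-D)) (fromRows 0 Cᵀ) (fromCols 0 C) E *ᵥ
        Sum.elim (Sum.elim x y) z =
      lam • (fromBlocks (fromBlocks A 0 0 S₁) 0 0 S₂ *ᵥ Sum.elim (Sum.elim x y) z)) :
    A *ᵥ x + Bᵀ *ᵥ y = lam • (A *ᵥ x) ∧
      B *ᵥ x - D *ᵥ y + Cᵀ *ᵥ z = lam • (S₁ *ᵥ y) ∧
      C *ᵥ y + E *ᵥ z = lam • (S₂ *ᵥ z) := by
  simp only [fromBlocks_mulVec, fromRows_mulVec, fromCols_mulVec_sumElim, Sum.elim_comp_inl,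
    Sum.elim_comp_inr, zero_mulVec, add_zero, zero_add, neg_mulVec] at h
  refine ⟨?_, ?_, ?_⟩ <;> funext i
  · simpa using congrFun h (Sum.inl (Sum.inl i))
  · simpa [sub_eq_add_neg] using congrFun h (Sum.inl (Sum.inr i))
  · simpa using congrFun h (Sum.inr i)

theorem schur_mulVec_relation [DecidableEq ι] {A : Matrix ι ι ℝ} (hA : IsUnit A.det)
    {B : Matrix κ ι ℝ} {F : Matrix κ τ ℝ}
    (hx : A *ᵥ x + Bᵀ *ᵥ y = lam • (A *ᵥ x))
    (hy : B *ᵥ x + F *ᵥ z = lam • ((B * A⁻¹ * Bᵀ) *ᵥ y)) :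
    (lam ^ 2 - lam - 1) • ((B * A⁻¹ * Bᵀ) *ᵥ y) = (lam - 1) • (F *ᵥ z) := by
  have hBy : Bᵀ *ᵥ y = (lam - 1) • (A *ᵥ x) := by
    rw [sub_smul, one_smul, ← hx, add_sub_cancel_left]
  have hSy : (B * A⁻¹ * Bᵀ) *ᵥ y = (lam - 1) • (B *ᵥ x) := by
    rw [← mulVec_mulVec, ← mulVec_mulVec, hBy, mulVec_smul, mulVec_mulVec, nonsing_inv_mul _ hA,
      one_mulVec, mulVec_smul]
  funext i
  have c₁ := congrFun hSy i
  have c₂ := congrFun hy i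
  simp only [Pi.add_apply, Pi.smul_apply, smul_eq_mul] at c₁ c₂ ⊢
  linear_combination -c₁ - (lam - 1) * c₂

theorem rayleigh_relation [DecidableEq κ] {S₁ : Matrix κ κ ℝ} (hS₁ : IsUnit S₁.det)
    {C : Matrix τ κ ℝ} {E : Matrix τ τ ℝ}
    (hSy : (lam ^ 2 - lam - 1) • (S₁ *ᵥ y) = (lam - 1) • (Cᵀ *ᵥ z))
    (hz : C *ᵥ y + E *ᵥ z = lam • ((E + C * S₁⁻¹ * Cᵀ) *ᵥ z)) :
    lam * (2 - lam) * (z ⬝ᵥ (C * S₁⁻¹ * Cᵀ) *ᵥ z) =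
      (lam - 1) * (lam ^ 2 - lam - 1) * (z ⬝ᵥ (E + C * S₁⁻¹ * Cᵀ) *ᵥ z) := by
  have hCy : (lam ^ 2 - lam - 1) • (C *ᵥ y) = (lam - 1) • ((C * S₁⁻¹ * Cᵀ) *ᵥ z) := by
    have h := congrArg ((C * S₁⁻¹) *ᵥ ·) hSy
    simpa only [mulVec_smul, mulVec_mulVec, Matrix.mul_assoc, nonsing_inv_mul _ hS₁,
      Matrix.mul_one] using h
  have h₁ := congrArg (z ⬝ᵥ ·) hCy
  have h₂ := congrArg (z ⬝ᵥ ·) hz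
  simp only [dotProduct_add, dotProduct_smul, smul_eq_mul, add_mulVec] at h₁ h₂ ⊢
  linear_combination -h₁ + (lam ^ 2 - lam - 1) * h₂

theorem eigenvalue_mul_cubic_nonpos [DecidableEq ι] [DecidableEq κ] {A : Matrix ι ι ℝ}
    {B : Matrix κ ι ℝ} {C : Matrix τ κ ℝ} {E : Matrix τ τ ℝ}
    (hA : A.PosDef) (hE : E.PosSemidef) (hS₁ : (B * A⁻¹ * Bᵀ).PosDef)
    (hS₂ : (E + C * (B * A⁻¹ * Bᵀ)⁻¹ * Cᵀ).PosDef) (hv : Sum.elim (Sum.elim x y) z ≠ 0)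
    (hx : A *ᵥ x + Bᵀ *ᵥ y = lam • (A *ᵥ x))
    (hy : B *ᵥ x + Cᵀ *ᵥ z = lam • ((B * A⁻¹ * Bᵀ) *ᵥ y))
    (hz : C *ᵥ y + E *ᵥ z = lam • ((E + C * (B * A⁻¹ * Bᵀ)⁻¹ * Cᵀ) *ᵥ z)) :
    (lam - 1) * (lam ^ 2 - lam - 1) * (lam ^ 3 - lam ^ 2 - 2 * lam + 1) ≤ 0 := by
  have hSy := schur_mulVec_relation (isUnit_iff_ne_zero.2 hA.det_pos.ne') hx hy
  by_cases hz0 : z = 0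
  · suffices hq : (lam - 1) * (lam ^ 2 - lam - 1) = 0 by rw [hq, zero_mul]
    by_contra hq
    obtain ⟨hl₁, hl₂⟩ := mul_ne_zero_iff.1 hq
    rw [hz0, mulVec_zero, smul_zero] at hSy
    have hy0 : y = 0 := mulVec_injective_iff_isUnit.2 hS₁.isUnit <| by
      rw [(smul_eq_zero.1 hSy).resolve_left hl₂, mulVec_zero]
    have hAx : (lam - 1) • (A *ᵥ x) = 0 := by
      rw [sub_smul, one_smul, ← hx, hy0, mulVec_zero, add_zero, sub_self]
    have hx0 : x = 0 := mulVec_injective_iff_isUnit.2 hA.isUnit <| by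
      rw [(smul_eq_zero.1 hAx).resolve_left hl₁, mulVec_zero]
    exact hv (by rw [hx0, hy0, hz0, Sum.elim_zero_zero, Sum.elim_zero_zero])
  · have ha : 0 ≤ z ⬝ᵥ (C * (B * A⁻¹ * Bᵀ)⁻¹ * Cᵀ) *ᵥ z := by
      simpa using (hS₁.inv.posSemidef.mul_mul_conjTranspose_same C).dotProduct_mulVec_nonneg z
    have he : 0 ≤ z ⬝ᵥ E *ᵥ z := by simpa using hE.dotProduct_mulVec_nonneg z
    have hs : 0 < z ⬝ᵥ (E + C * (B * A⁻¹ * Bᵀ)⁻¹ * Cᵀ) *ᵥ z := by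
      simpa using hS₂.dotProduct_mulVec_pos hz0
    have has := mul_sub_nonpos_of_mul_eq_mul hs ha
      (by rw [add_mulVec, dotProduct_add]; linarith)
      (rayleigh_relation (isUnit_iff_ne_zero.2 hS₁.det_pos.ne') hSy hz)
    linear_combination has

end Blocks

theorem stmt_11_general (n m p : ℕ)
    (A : Matrix (Fin n) (Fin n) ℝ) (B : Matrix (Fin m) (Fin n) ℝ)
    (C : Matrix (Fin p) (Fin m) ℝ) (D : Matrix (Fin m) (Fin m) ℝ)
    (E : Matrix (Fin p) (Fin p) ℝ)
    (hA : A.PosDef) (hE : E.PosSemidef)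
    (hD0 : D = 0)
    (K : Matrix ((Fin n ⊕ Fin m) ⊕ Fin p) ((Fin n ⊕ Fin m) ⊕ Fin p) ℝ)
    (hK : K = fromBlocks (fromBlocks A Bᵀ B (-D)) (fromRows 0 Cᵀ) (fromCols 0 C) E)
    (S₁ : Matrix (Fin m) (Fin m) ℝ) (hS₁ : S₁ = D + B * A⁻¹ * Bᵀ)
    (S₂ : Matrix (Fin p) (Fin p) ℝ) (hS₂ : S₂ = E + C * S₁⁻¹ * Cᵀ)
    (hS₁pd : S₁.PosDef) (hS₂pd : S₂.PosDef)
    (M : Matrix ((Fin n ⊕ Fin m) ⊕ Fin p) ((Fin n ⊕ Fin m) ⊕ Fin p) ℝ)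
    (hM : M = fromBlocks (fromBlocks A 0 0 S₁) 0 0 S₂)
    -- the three real roots of g(λ) = λ³ − λ² − 2λ + 1
    (ζneg ζ₁ ζ₂ : ℝ) (h₁ : ζneg < 0) (h₂ : 0 < ζ₁) (h₃ : ζ₁ < ζ₂)
    (hgneg : ζneg ^ 3 - ζneg ^ 2 - 2 * ζneg + 1 = 0)
    (hg₁ : ζ₁ ^ 3 - ζ₁ ^ 2 - 2 * ζ₁ + 1 = 0)
    (hg₂ : ζ₂ ^ 3 - ζ₂ ^ 2 - 2 * ζ₂ + 1 = 0) :
    ∀ (lam : ℝ) (v : (Fin n ⊕ Fin m) ⊕ Fin p → ℝ), v ≠ 0 →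
      K.mulVec v = lam • M.mulVec v →
      (ζneg ≤ lam ∧ lam ≤ (1 - Real.sqrt 5) / 2) ∨
      (ζ₁ ≤ lam ∧ lam ≤ 1) ∨
      ((1 + Real.sqrt 5) / 2 ≤ lam ∧ lam ≤ ζ₂) := by
  intro lam v hv hKv
  subst hD0 hK hM hS₂
  rw [zero_add] at hS₁
  subst hS₁
  obtain ⟨x, y, z, rfl⟩ : ∃ x y z, v = Sum.elim (Sum.elim x y) z :=
    ⟨_, _, _, by funext i; rcases i with (i | i) | i <;> rfl⟩
  obtain ⟨hx, hy, hz⟩ := block_equations_of_mulVec_eq_smul hKv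
  rw [zero_mulVec, sub_zero] at hy
  exact mem_localization_of_mul_cubic_nonpos h₁ h₂ h₃ hgneg hg₁ hg₂
    (eigenvalue_mul_cubic_nonpos hA hE hS₁pd hS₂pd hv hx hy hz)

/-- Eigenvalue localization for the preconditioned matrix `M⁻¹K` when `D = 0`. -/
theorem stmt_11 (n m p : ℕ) (hp : 0 < p) (hmp : p ≤ m) (hnm : m ≤ n)
    (A : Matrix (Fin n) (Fin n) ℝ) (B : Matrix (Fin m) (Fin n) ℝ)
    (C : Matrix (Fin p) (Fin m) ℝ) (D : Matrix (Fin m) (Fin m) ℝ)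
    (E : Matrix (Fin p) (Fin p) ℝ)
    (hA : A.PosDef) (hD : D.PosSemidef) (hE : E.PosSemidef)
    (hB : B.rank = m)
    (hD0 : D = 0)
    (K : Matrix ((Fin n ⊕ Fin m) ⊕ Fin p) ((Fin n ⊕ Fin m) ⊕ Fin p) ℝ)
    (hK : K = fromBlocks (fromBlocks A Bᵀ B (-D)) (fromRows 0 Cᵀ) (fromCols 0 C) E)
    (S₁ : Matrix (Fin m) (Fin m) ℝ) (hS₁ : S₁ = D + B * A⁻¹ * Bᵀ)
    (S₂ : Matrix (Fin p) (Fin p) ℝ) (hS₂ : S₂ = E + C * S₁⁻¹ * Cᵀ)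
    (hS₁pd : S₁.PosDef) (hS₂pd : S₂.PosDef)
    (M : Matrix ((Fin n ⊕ Fin m) ⊕ Fin p) ((Fin n ⊕ Fin m) ⊕ Fin p) ℝ)
    (hM : M = fromBlocks (fromBlocks A 0 0 S₁) 0 0 S₂)
    -- the three real roots of g(λ) = λ³ − λ² − 2λ + 1
    (ζneg ζ₁ ζ₂ : ℝ) (h₁ : ζneg < 0) (h₂ : 0 < ζ₁) (h₃ : ζ₁ < ζ₂)
    (hgneg : ζneg ^ 3 - ζneg ^ 2 - 2 * ζneg + 1 = 0)
    (hg₁ : ζ₁ ^ 3 - ζ₁ ^ 2 - 2 * ζ₁ + 1 = 0)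
    (hg₂ : ζ₂ ^ 3 - ζ₂ ^ 2 - 2 * ζ₂ + 1 = 0) :
    ∀ (lam : ℝ) (v : (Fin n ⊕ Fin m) ⊕ Fin p → ℝ), v ≠ 0 →
      K.mulVec v = lam • M.mulVec v →
      (ζneg ≤ lam ∧ lam ≤ (1 - Real.sqrt 5) / 2) ∨
      (ζ₁ ≤ lam ∧ lam ≤ 1) ∨
      ((1 + Real.sqrt 5) / 2 ≤ lam ∧ lam ≤ ζ₂) :=
  stmt_11_general n m p A B C D E hA hE hD0 K hK S₁ hS₁ S₂ hS₂ hS₁pd hS₂pd M hM ζneg ζ₁ ζ₂ h₁ h₂ h₃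
    hgneg hg₁ hg₂
end

section
/- Correspondence between Schur-complement eigenvalues and preconditioned eigenvalues when D = 0: assume D = 0. Suppose δ ∈ (0, 1] and z ∈ ℝᵖ is nonzero with C S₁⁻¹ Cᵀ z = δ · (S₂ z). Then every real root λ of the cubic λ³ − (2 − δ)λ² − 2δλ + 1 = 0 is an eigenvalue of M⁻¹K; that is, there exists a nonzero v ∈ ℝ^{n+m+p} with K v = λ (M v). -/
/-! With `D = 0`, put `w = S₁⁻¹ Cᵀ z` and `t = λ² - λ - 1`. Then `v = (A⁻¹ Bᵀ w, (λ - 1) w, t z)`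
satisfies `K v = λ M v`: the first two block rows only use `S₁ = B A⁻¹ Bᵀ`, and the third reduces,
via `E = S₂ - C S₁⁻¹ Cᵀ` and the eigen-relation for `z`, to `(λ - 1) δ + t (1 - δ) = λ t`, which is
the cubic. The vector is nonzero because `t ≠ 0`: otherwise the cubic forces `λ = 1`, where
`t = -1`. -/

open Matrix

theorem Sum.smul_elim {α β R S : Type*} [SMul R S] (c : R) (f : α → S) (g : β → S) :
    c • Sum.elim f g = Sum.elim (c • f) (c • g) := by
  ext (i | i) <;> rfl

theorem Sum.elim_ne_zero_of_right {α β S : Type*} [Zero S] (f : α → S) {g : β → S} (hg : g ≠ 0) :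
    Sum.elim f g ≠ 0 := by
  rw [← Sum.elim_zero_zero, Ne, Sum.elim_eq_iff, not_and]
  exact fun _ => hg

theorem fromBlocks_saddle_mulVec_eq_smul_iff {R l m p : Type*} [CommRing R] [Fintype l]
    [Fintype m] [Fintype p] (A : Matrix l l R) (B : Matrix m l R) (C : Matrix p m R)
    (D : Matrix m m R) (E : Matrix p p R) (S₁ : Matrix m m R) (S₂ : Matrix p p R)
    (x : l → R) (y : m → R) (z : p → R) (lam : R) :
    fromBlocks (fromBlocks A Bᵀ B (-D)) (fromRows 0 Cᵀ) (fromCols 0 C) E *ᵥ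
        Sum.elim (Sum.elim x y) z =
      lam • fromBlocks (fromBlocks A 0 0 S₁) 0 0 S₂ *ᵥ Sum.elim (Sum.elim x y) z ↔
      A *ᵥ x + Bᵀ *ᵥ y = lam • A *ᵥ x ∧ B *ᵥ x - D *ᵥ y + Cᵀ *ᵥ z = lam • S₁ *ᵥ y ∧
        C *ᵥ y + E *ᵥ z = lam • S₂ *ᵥ z := by
  simp only [fromBlocks_mulVec, fromRows_mulVec, fromCols_mulVec_sumElim, Sum.elim_comp_inl,
    Sum.elim_comp_inr, zero_mulVec, neg_mulVec, Sum.smul_elim, ← Sum.elim_add_add,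
    Sum.elim_eq_iff, add_zero, zero_add, sub_eq_add_neg, and_assoc]

theorem sq_sub_self_sub_one_ne_zero_of_cubic {K : Type*} [Field K] {δ lam : K} (hδ : δ ≠ 0)
    (hlam : lam ^ 3 - (2 - δ) * lam ^ 2 - 2 * δ * lam + 1 = 0) : lam ^ 2 - lam - 1 ≠ 0 := by
  intro ht
  have hlam1 : lam = 1 := by
    have : δ * (1 - lam) = 0 := by linear_combination hlam - (lam + δ - 1) * ht
    linear_combination -((mul_eq_zero.1 this).resolve_left hδ)
  norm_num [hlam1] at ht

theorem exists_ne_zero_saddle_mulVec_eq_smul {K l m p : Type*} [Field K] [Fintype l]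
    [Fintype m] [Fintype p] [DecidableEq l] [DecidableEq m] {A : Matrix l l K}
    {B : Matrix m l K} {C : Matrix p m K} {E : Matrix p p K} {S₁ : Matrix m m K}
    {S₂ : Matrix p p K} (hA : IsUnit A.det) (hS₁u : IsUnit S₁.det) (hS₁ : S₁ = B * A⁻¹ * Bᵀ)
    (hS₂ : S₂ = E + C * S₁⁻¹ * Cᵀ) {δ : K} (hδ : δ ≠ 0) {z : p → K} (hz : z ≠ 0)
    (hzeig : (C * S₁⁻¹ * Cᵀ) *ᵥ z = δ • S₂ *ᵥ z) {lam : K}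
    (hlam : lam ^ 3 - (2 - δ) * lam ^ 2 - 2 * δ * lam + 1 = 0) :
    ∃ v, v ≠ 0 ∧ fromBlocks (fromBlocks A Bᵀ B 0) (fromRows 0 Cᵀ) (fromCols 0 C) E *ᵥ v =
      lam • fromBlocks (fromBlocks A 0 0 S₁) 0 0 S₂ *ᵥ v := by
  set t := lam ^ 2 - lam - 1
  set w := S₁⁻¹ *ᵥ Cᵀ *ᵥ z
  set x := A⁻¹ *ᵥ Bᵀ *ᵥ w
  have hS₁w : S₁ *ᵥ w = Cᵀ *ᵥ z := by
    rw [mulVec_mulVec, mul_nonsing_inv _ hS₁u, one_mulVec]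
  have hAx : A *ᵥ x = Bᵀ *ᵥ w := by
    rw [mulVec_mulVec, mul_nonsing_inv _ hA, one_mulVec]
  have hBx : B *ᵥ x = Cᵀ *ᵥ z := by
    rw [mulVec_mulVec, mulVec_mulVec, ← hS₁, hS₁w]
  have row₁ : A *ᵥ x + Bᵀ *ᵥ ((lam - 1) • w) = lam • A *ᵥ x := by
    rw [hAx, mulVec_smul]
    module
  have row₂ : B *ᵥ x - 0 *ᵥ ((lam - 1) • w) + Cᵀ *ᵥ (t • z) = lam • S₁ *ᵥ ((lam - 1) • w) := by
    rw [hBx, zero_mulVec, sub_zero, mulVec_smul, mulVec_smul, hS₁w, smul_smul]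
    have : 1 + t = lam * (lam - 1) := by ring
    rw [← this]
    module
  have row₃ : C *ᵥ ((lam - 1) • w) + E *ᵥ (t • z) = lam • S₂ *ᵥ (t • z) := by
    have hE : E = S₂ - C * S₁⁻¹ * Cᵀ := by rw [hS₂, add_sub_cancel_right]
    rw [mulVec_smul, mulVec_smul, mulVec_smul, hE, sub_mulVec, mulVec_mulVec, mulVec_mulVec, hzeig]
    have : (lam - 1) * δ + t * (1 - δ) = lam * t := by linear_combination -hlam
    calc (lam - 1) • δ • S₂ *ᵥ z + t • (S₂ *ᵥ z - δ • S₂ *ᵥ z)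
        = ((lam - 1) * δ + t * (1 - δ)) • S₂ *ᵥ z := by module
      _ = lam • t • S₂ *ᵥ z := by rw [this, smul_smul]
  have hv := (fromBlocks_saddle_mulVec_eq_smul_iff A B C 0 E S₁ S₂ _ _ _ lam).2
    ⟨row₁, row₂, row₃⟩
  rw [neg_zero] at hv
  exact ⟨_, Sum.elim_ne_zero_of_right _ (smul_ne_zero
    (sq_sub_self_sub_one_ne_zero_of_cubic hδ hlam) hz), hv⟩

theorem stmt_12_general (n m p : ℕ)
    (A : Matrix (Fin n) (Fin n) ℝ) (B : Matrix (Fin m) (Fin n) ℝ)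
    (C : Matrix (Fin p) (Fin m) ℝ) (D : Matrix (Fin m) (Fin m) ℝ)
    (E : Matrix (Fin p) (Fin p) ℝ)
    (hA : A.PosDef)
    (hD0 : D = 0)
    (K : Matrix ((Fin n ⊕ Fin m) ⊕ Fin p) ((Fin n ⊕ Fin m) ⊕ Fin p) ℝ)
    (hK : K = fromBlocks (fromBlocks A Bᵀ B (-D)) (fromRows 0 Cᵀ) (fromCols 0 C) E)
    (S₁ : Matrix (Fin m) (Fin m) ℝ) (hS₁ : S₁ = D + B * A⁻¹ * Bᵀ)
    (S₂ : Matrix (Fin p) (Fin p) ℝ) (hS₂ : S₂ = E + C * S₁⁻¹ * Cᵀ)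
    (hS₁pd : S₁.PosDef)
    (M : Matrix ((Fin n ⊕ Fin m) ⊕ Fin p) ((Fin n ⊕ Fin m) ⊕ Fin p) ℝ)
    (hM : M = fromBlocks (fromBlocks A 0 0 S₁) 0 0 S₂)
    (δ : ℝ) (hδ0 : 0 < δ)
    (z : Fin p → ℝ) (hz : z ≠ 0)
    (hzeig : (C * S₁⁻¹ * Cᵀ).mulVec z = δ • S₂.mulVec z) :
    ∀ lam : ℝ, lam ^ 3 - (2 - δ) * lam ^ 2 - 2 * δ * lam + 1 = 0 →
      ∃ v : (Fin n ⊕ Fin m) ⊕ Fin p → ℝ, v ≠ 0 ∧ K.mulVec v = lam • M.mulVec v := by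
  intro lam hlam
  rw [hD0, zero_add] at hS₁
  rw [hK, hM, hD0, neg_zero]
  exact exists_ne_zero_saddle_mulVec_eq_smul hA.det_pos.ne'.isUnit hS₁pd.det_pos.ne'.isUnit
    hS₁ hS₂ hδ0.ne' hz hzeig hlam

/-- Correspondence between Schur-complement eigenvalues and preconditioned
eigenvalues when `D = 0`. -/
theorem stmt_12 (n m p : ℕ) (hp : 0 < p) (hmp : p ≤ m) (hnm : m ≤ n)
    (A : Matrix (Fin n) (Fin n) ℝ) (B : Matrix (Fin m) (Fin n) ℝ)
    (C : Matrix (Fin p) (Fin m) ℝ) (D : Matrix (Fin m) (Fin m) ℝ)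
    (E : Matrix (Fin p) (Fin p) ℝ)
    (hA : A.PosDef) (hD : D.PosSemidef) (hE : E.PosSemidef)
    (hB : B.rank = m)
    (hD0 : D = 0)
    (K : Matrix ((Fin n ⊕ Fin m) ⊕ Fin p) ((Fin n ⊕ Fin m) ⊕ Fin p) ℝ)
    (hK : K = fromBlocks (fromBlocks A Bᵀ B (-D)) (fromRows 0 Cᵀ) (fromCols 0 C) E)
    (S₁ : Matrix (Fin m) (Fin m) ℝ) (hS₁ : S₁ = D + B * A⁻¹ * Bᵀ)
    (S₂ : Matrix (Fin p) (Fin p) ℝ) (hS₂ : S₂ = E + C * S₁⁻¹ * Cᵀ)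
    (hS₁pd : S₁.PosDef) (hS₂pd : S₂.PosDef)
    (M : Matrix ((Fin n ⊕ Fin m) ⊕ Fin p) ((Fin n ⊕ Fin m) ⊕ Fin p) ℝ)
    (hM : M = fromBlocks (fromBlocks A 0 0 S₁) 0 0 S₂)
    (δ : ℝ) (hδ0 : 0 < δ) (hδ1 : δ ≤ 1)
    (z : Fin p → ℝ) (hz : z ≠ 0)
    (hzeig : (C * S₁⁻¹ * Cᵀ).mulVec z = δ • S₂.mulVec z) :
    ∀ lam : ℝ, lam ^ 3 - (2 - δ) * lam ^ 2 - 2 * δ * lam + 1 = 0 →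
      ∃ v : (Fin n ⊕ Fin m) ⊕ Fin p → ℝ, v ≠ 0 ∧ K.mulVec v = lam • M.mulVec v :=
  stmt_12_general n m p A B C D E hA hD0 K hK S₁ hS₁ S₂ hS₂ hS₁pd M hM δ hδ0 z hz hzeig
end

section
/- Negative eigenvalue bounds for the Schur-complement preconditioned matrix: every negative eigenvalue λ of M⁻¹K satisfies −(1 + √5)/2 ≤ λ ≤ (1 − √5)/2. -/
/-!
Write an eigenvector as `(x, y, z)`. The first block row gives `Bᵀy = (λ - 1)Ax`, so testing the
second and third rows against `y` and `z` expresses `c = yᵀCᵀz` in two ways through the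
nonnegative energies `a = xᵀAx`, `d = yᵀDy`, `e = zᵀEz`, `t = (Cᵀz)ᵀS₁⁻¹(Cᵀz)`:
`c = (1 + λ)d + (λ - 1)(λ² - λ - 1)a = (λ - 1)e + λt`, while Cauchy–Schwarz gives
`c² ≤ t · yᵀS₁y = t (d + (λ - 1)²a)`. For `ψ < λ < 0` the two expressions for `c` have opposite
signs, and for `λ < -φ` Cauchy–Schwarz gives `λc ≤ d + (λ - 1)²a`, which is impossible with
positive coefficients; either way all energies vanish, and then so does the eigenvector.
-/

open Matrix Real goldenRatio

section QuadraticForms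

variable {ι κ : Type*} [Fintype ι] [Fintype κ]

theorem Matrix.PosSemidef.sq_dotProduct_mulVec_le {S : Matrix ι ι ℝ} (hS : S.PosSemidef)
    (u v : ι → ℝ) : (u ⬝ᵥ S *ᵥ v) ^ 2 ≤ (u ⬝ᵥ S *ᵥ u) * (v ⬝ᵥ S *ᵥ v) := by
  let := S.toSeminormedAddCommGroup hS
  let := S.toInnerProductSpace hS
  have h := real_inner_mul_inner_self_le u v
  change (S *ᵥ v) ⬝ᵥ star u * ((S *ᵥ v) ⬝ᵥ star u)
    ≤ ((S *ᵥ u) ⬝ᵥ star u) * ((S *ᵥ v) ⬝ᵥ star v) at h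
  simpa [sq, dotProduct_comm] using h

theorem Matrix.PosDef.sq_dotProduct_le [DecidableEq ι] {S : Matrix ι ι ℝ} (hS : S.PosDef)
    (y w : ι → ℝ) : (y ⬝ᵥ w) ^ 2 ≤ (w ⬝ᵥ S⁻¹ *ᵥ w) * (y ⬝ᵥ S *ᵥ y) := by
  have h := hS.inv.posSemidef.sq_dotProduct_mulVec_le w (S *ᵥ y)
  rwa [mulVec_mulVec, nonsing_inv_mul _ hS.det_pos.ne'.isUnit, one_mulVec, dotProduct_comm w,
    dotProduct_comm (S *ᵥ y)] at h

theorem Matrix.PosDef.eq_zero_of_dotProduct_mulVec_self_eq_zero {S : Matrix ι ι ℝ}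
    (hS : S.PosDef) {x : ι → ℝ} (h : x ⬝ᵥ S *ᵥ x = 0) : x = 0 := by
  by_contra hx
  simpa [h] using hS.dotProduct_mulVec_pos hx

theorem dotProduct_add_mul_mul_transpose_mulVec (E : Matrix κ κ ℝ) (C : Matrix κ ι ℝ)
    (S : Matrix ι ι ℝ) (z : κ → ℝ) :
    z ⬝ᵥ (E + C * S * Cᵀ) *ᵥ z = z ⬝ᵥ E *ᵥ z + (Cᵀ *ᵥ z) ⬝ᵥ S *ᵥ (Cᵀ *ᵥ z) := by
  rw [add_mulVec, dotProduct_add, ← mulVec_mulVec, ← mulVec_mulVec,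
    ← dotProduct_transpose_mulVec C, dotProduct_comm (S *ᵥ _)]

theorem dotProduct_mulVec_eq_of_transpose_mulVec_eq {A : Matrix ι ι ℝ} {B : Matrix κ ι ℝ}
    {x : ι → ℝ} {y : κ → ℝ} {c : ℝ} (h : Bᵀ *ᵥ y = c • A *ᵥ x) :
    y ⬝ᵥ B *ᵥ x = c * (x ⬝ᵥ A *ᵥ x) := by
  rw [← dotProduct_transpose_mulVec, h, dotProduct_smul, smul_eq_mul]

theorem dotProduct_schur_mulVec_eq [DecidableEq ι] {A : Matrix ι ι ℝ} (hA : IsUnit A.det)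
    {B : Matrix κ ι ℝ} (D : Matrix κ κ ℝ) {x : ι → ℝ} {y : κ → ℝ} {c : ℝ}
    (h : Bᵀ *ᵥ y = c • A *ᵥ x) :
    y ⬝ᵥ (D + B * A⁻¹ * Bᵀ) *ᵥ y = y ⬝ᵥ D *ᵥ y + c ^ 2 * (x ⬝ᵥ A *ᵥ x) := by
  rw [dotProduct_add_mul_mul_transpose_mulVec, h, mulVec_smul, mulVec_mulVec,
    nonsing_inv_mul _ hA, one_mulVec, smul_dotProduct, dotProduct_smul, dotProduct_comm (A *ᵥ x),
    smul_eq_mul, smul_eq_mul, ← mul_assoc, ← sq]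

end QuadraticForms

theorem saddle_mulVec_eq_smul_mulVec {ι κ ν : Type*} [Fintype ι] [Fintype κ] [Fintype ν]
    {A : Matrix ι ι ℝ} {B : Matrix κ ι ℝ} {C : Matrix ν κ ℝ}
    {D S₁ : Matrix κ κ ℝ} {E S₂ : Matrix ν ν ℝ} {lam : ℝ} {x : ι → ℝ} {y : κ → ℝ} {z : ν → ℝ}
    (h : fromBlocks (fromBlocks A Bᵀ B (-D)) (fromRows 0 Cᵀ) (fromCols 0 C) E *ᵥ
        Sum.elim (Sum.elim x y) z =
      lam • fromBlocks (fromBlocks A 0 0 S₁) 0 0 S₂ *ᵥ Sum.elim (Sum.elim x y) z) :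
    A *ᵥ x + Bᵀ *ᵥ y = lam • A *ᵥ x ∧ B *ᵥ x - D *ᵥ y + Cᵀ *ᵥ z = lam • S₁ *ᵥ y ∧
      C *ᵥ y + E *ᵥ z = lam • S₂ *ᵥ z := by
  rw [← smul_mulVec, fromBlocks_smul, fromBlocks_smul] at h
  simp only [fromBlocks_mulVec, fromRows_mulVec, fromCols_mulVec_sumElim, Sum.elim_comp_inl,
    Sum.elim_comp_inr, zero_mulVec, neg_mulVec, zero_add, add_zero, smul_zero, smul_mulVec,
    ← Sum.elim_add_add, Sum.elim_eq_iff] at h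
  exact ⟨h.1.1, by rw [sub_eq_add_neg]; exact h.1.2, h.2⟩

theorem neg_goldenRatio_le_of_sq_add_self_sub_one_nonpos {x : ℝ} (h : x ^ 2 + x - 1 ≤ 0) :
    -φ ≤ x := by
  have hfac : x ^ 2 + x - 1 = (x + φ) * (x + ψ) := by
    linear_combination (1 / 4 : ℝ) * sq_sqrt (show (0 : ℝ) ≤ 5 by norm_num)
  have hψφ : ψ < φ := goldenConj_neg.trans goldenRatio_pos
  by_contra! hx
  nlinarith

theorem le_goldenConj_of_neg_of_sq_sub_self_sub_one_nonneg {x : ℝ} (hx : x < 0)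
    (h : 0 ≤ x ^ 2 - x - 1) : x ≤ ψ := by
  have hfac : x ^ 2 - x - 1 = (x - φ) * (x - ψ) := by
    linear_combination (1 / 4 : ℝ) * sq_sqrt (show (0 : ℝ) ≤ 5 by norm_num)
  nlinarith [goldenRatio_pos]

theorem eq_zero_of_mul_add_mul_eq_zero {p q u v : ℝ} (hp : 0 < p) (hq : 0 < q) (hu : 0 ≤ u)
    (hv : 0 ≤ v) (h : p * u + q * v = 0) : u = 0 ∧ v = 0 := by
  obtain ⟨hpu, hqv⟩ := (add_eq_zero_iff_of_nonneg (by positivity) (by positivity)).1 h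
  exact ⟨(mul_eq_zero.1 hpu).resolve_left hp.ne', (mul_eq_zero.1 hqv).resolve_left hq.ne'⟩

theorem mul_le_of_le_mul_of_sq_le_mul {lam c t s : ℝ} (hlam : lam < 0) (ht : 0 ≤ t)
    (hs : 0 ≤ s) (hc : c ≤ lam * t) (hcs : c ^ 2 ≤ t * s) : lam * c ≤ s := by
  rcases ht.eq_or_lt with rfl | ht
  · have hc0 : c = 0 := pow_eq_zero_iff two_ne_zero |>.1 <|
      le_antisymm (by simpa using hcs) (sq_nonneg c)
    simpa [hc0] using hs
  · nlinarith [mul_le_mul_of_nonpos_left hc (show c ≤ 0 by nlinarith)]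

/-- For an eigenvector `(x, y, z)`, the variables `a, d, e, t, c` stand for
`xᵀAx, yᵀDy, zᵀEz, (Cᵀz)ᵀS₁⁻¹(Cᵀz), yᵀCᵀz` (see `EnergyRelations.of_eigen`). -/
structure EnergyRelations (lam a d e t c : ℝ) : Prop where
  a_nonneg : 0 ≤ a
  d_nonneg : 0 ≤ d
  e_nonneg : 0 ≤ e
  t_nonneg : 0 ≤ t
  second_row : c = (1 + lam) * d + (lam - 1) * (lam ^ 2 - lam - 1) * a
  third_row : c = (lam - 1) * e + lam * t
  cauchy_schwarz : c ^ 2 ≤ t * (d + (lam - 1) ^ 2 * a)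

namespace EnergyRelations

variable {lam a d e t c : ℝ}

section Eigen

variable {ι κ ν : Type*} [Fintype ι] [Fintype κ] [Fintype ν] [DecidableEq ι] [DecidableEq κ]
  {A : Matrix ι ι ℝ} {B : Matrix κ ι ℝ} {C : Matrix ν κ ℝ} {D S₁ : Matrix κ κ ℝ}
  {E S₂ : Matrix ν ν ℝ} {x : ι → ℝ} {y : κ → ℝ} {z : ν → ℝ}

theorem of_eigen (hA : A.PosDef) (hD : D.PosSemidef) (hE : E.PosSemidef) (hS₁pd : S₁.PosDef)
    (hS₁ : S₁ = D + B * A⁻¹ * Bᵀ) (hS₂ : S₂ = E + C * S₁⁻¹ * Cᵀ)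
    (hBy : Bᵀ *ᵥ y = (lam - 1) • A *ᵥ x)
    (h₂ : B *ᵥ x - D *ᵥ y + Cᵀ *ᵥ z = lam • S₁ *ᵥ y) (h₃ : C *ᵥ y + E *ᵥ z = lam • S₂ *ᵥ z) :
    EnergyRelations lam (x ⬝ᵥ A *ᵥ x) (y ⬝ᵥ D *ᵥ y) (z ⬝ᵥ E *ᵥ z)
      ((Cᵀ *ᵥ z) ⬝ᵥ S₁⁻¹ *ᵥ (Cᵀ *ᵥ z)) (y ⬝ᵥ Cᵀ *ᵥ z) := by
  have hS₁y := hS₁ ▸ dotProduct_schur_mulVec_eq hA.det_pos.ne'.isUnit D hBy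
  have hyBx := dotProduct_mulVec_eq_of_transpose_mulVec_eq hBy
  have hy := congrArg (y ⬝ᵥ ·) h₂
  have hz := congrArg (z ⬝ᵥ ·) h₃
  simp only [dotProduct_add, dotProduct_sub, dotProduct_smul, smul_eq_mul] at hy hz
  rw [hS₂, dotProduct_add_mul_mul_transpose_mulVec, ← dotProduct_transpose_mulVec C] at hz
  refine ⟨by simpa using hA.posSemidef.dotProduct_mulVec_nonneg x,
    by simpa using hD.dotProduct_mulVec_nonneg y, by simpa using hE.dotProduct_mulVec_nonneg z,
    by simpa using hS₁pd.inv.posSemidef.dotProduct_mulVec_nonneg (Cᵀ *ᵥ z), ?_, ?_, ?_⟩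
  · linear_combination hy - hyBx + lam * hS₁y
  · linear_combination hz
  · simpa [hS₁y] using hS₁pd.sq_dotProduct_le y (Cᵀ *ᵥ z)

end Eigen

theorem eq_zero_of_third_row_eq_zero (h : EnergyRelations lam a d e t c) (hlam : lam < 0)
    (hc : c = 0) : e = 0 ∧ t = 0 :=
  eq_zero_of_mul_add_mul_eq_zero (p := 1 - lam) (q := -lam) (by linarith) (by linarith)
    h.e_nonneg h.t_nonneg (by linear_combination h.third_row - hc)

theorem eq_zero_of_sq_sub_self_sub_one_neg (h : EnergyRelations lam a d e t c) (hlam : lam < 0)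
    (hq : lam ^ 2 - lam - 1 < 0) : a = 0 ∧ d = 0 ∧ e = 0 ∧ t = 0 := by
  have hd : 0 < 1 + lam := by nlinarith
  have ha : 0 < (lam - 1) * (lam ^ 2 - lam - 1) := mul_pos_of_neg_of_neg (by linarith) hq
  have hc : c = 0 := by
    refine le_antisymm ?_ ?_
    · rw [h.third_row]; nlinarith [h.e_nonneg, h.t_nonneg]
    · rw [h.second_row]
      exact add_nonneg (mul_nonneg hd.le h.d_nonneg) (mul_nonneg ha.le h.a_nonneg)
  obtain ⟨hd0, ha0⟩ := eq_zero_of_mul_add_mul_eq_zero hd ha h.d_nonneg h.a_nonneg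
    (by linear_combination hc - h.second_row)
  exact ⟨ha0, hd0, h.eq_zero_of_third_row_eq_zero hlam hc⟩

theorem eq_zero_of_sq_add_self_sub_one_pos (h : EnergyRelations lam a d e t c) (hlam : lam < 0)
    (hq : 0 < lam ^ 2 + lam - 1) : a = 0 ∧ d = 0 ∧ e = 0 ∧ t = 0 := by
  have hlam1 : lam < -1 := by nlinarith
  have hpa : 0 < (lam - 1) * (lam ^ 3 - lam ^ 2 - 2 * lam + 1) :=
    mul_pos_of_neg_of_neg (by linarith) (by nlinarith)
  have hle : lam * c ≤ d + (lam - 1) ^ 2 * a :=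
    mul_le_of_le_mul_of_sq_le_mul hlam h.t_nonneg (by nlinarith [h.a_nonneg, h.d_nonneg])
      (by nlinarith [h.third_row, h.e_nonneg]) h.cauchy_schwarz
  have hzero : (lam ^ 2 + lam - 1) * d + (lam - 1) * (lam ^ 3 - lam ^ 2 - 2 * lam + 1) * a = 0 := by
    refine le_antisymm ?_ (by nlinarith [h.a_nonneg, h.d_nonneg])
    rw [h.second_row] at hle
    linear_combination hle
  obtain ⟨hd0, ha0⟩ := eq_zero_of_mul_add_mul_eq_zero hq hpa h.d_nonneg h.a_nonneg hzero
  have hc : c = 0 := by rw [h.second_row, hd0, ha0]; ring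
  exact ⟨ha0, hd0, h.eq_zero_of_third_row_eq_zero hlam hc⟩

theorem neg_goldenRatio_le_and_le_goldenConj (h : EnergyRelations lam a d e t c) (hlam : lam < 0)
    (hne : ¬(a = 0 ∧ d = 0 ∧ e = 0 ∧ t = 0)) : -φ ≤ lam ∧ lam ≤ ψ :=
  ⟨neg_goldenRatio_le_of_sq_add_self_sub_one_nonpos <| not_lt.1 fun hq =>
      hne (h.eq_zero_of_sq_add_self_sub_one_pos hlam hq),
    le_goldenConj_of_neg_of_sq_sub_self_sub_one_nonneg hlam <| not_lt.1 fun hq =>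
      hne (h.eq_zero_of_sq_sub_self_sub_one_neg hlam hq)⟩

end EnergyRelations

theorem stmt_13_general (n m p : ℕ)
    (A : Matrix (Fin n) (Fin n) ℝ) (B : Matrix (Fin m) (Fin n) ℝ)
    (C : Matrix (Fin p) (Fin m) ℝ) (D : Matrix (Fin m) (Fin m) ℝ)
    (E : Matrix (Fin p) (Fin p) ℝ)
    (hA : A.PosDef) (hD : D.PosSemidef) (hE : E.PosSemidef)
    (K : Matrix ((Fin n ⊕ Fin m) ⊕ Fin p) ((Fin n ⊕ Fin m) ⊕ Fin p) ℝ)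
    (hK : K = fromBlocks (fromBlocks A Bᵀ B (-D)) (fromRows 0 Cᵀ) (fromCols 0 C) E)
    (S₁ : Matrix (Fin m) (Fin m) ℝ) (hS₁ : S₁ = D + B * A⁻¹ * Bᵀ)
    (S₂ : Matrix (Fin p) (Fin p) ℝ) (hS₂ : S₂ = E + C * S₁⁻¹ * Cᵀ)
    (hS₁pd : S₁.PosDef) (hS₂pd : S₂.PosDef)
    (M : Matrix ((Fin n ⊕ Fin m) ⊕ Fin p) ((Fin n ⊕ Fin m) ⊕ Fin p) ℝ)
    (hM : M = fromBlocks (fromBlocks A 0 0 S₁) 0 0 S₂) :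
    ∀ (lam : ℝ) (v : (Fin n ⊕ Fin m) ⊕ Fin p → ℝ), v ≠ 0 →
      K.mulVec v = lam • M.mulVec v → lam < 0 →
      -(1 + Real.sqrt 5) / 2 ≤ lam ∧ lam ≤ (1 - Real.sqrt 5) / 2 := by
  intro lam v hv hKv hlam
  obtain ⟨x, y, z, rfl⟩ : ∃ x y z, v = Sum.elim (Sum.elim x y) z :=
    ⟨_, _, _, by ext ((i | j) | k) <;> rfl⟩
  obtain ⟨h₁, h₂, h₃⟩ := saddle_mulVec_eq_smul_mulVec (hK ▸ hM ▸ hKv)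
  have hBy : Bᵀ *ᵥ y = (lam - 1) • A *ᵥ x := by
    rw [sub_smul, one_smul, eq_sub_iff_add_eq, add_comm, h₁]
  have hrel := EnergyRelations.of_eigen hA hD hE hS₁pd hS₁ hS₂ hBy h₂ h₃
  rw [neg_div]
  refine hrel.neg_goldenRatio_le_and_le_goldenConj hlam fun ⟨ha, hd, he, ht⟩ => hv ?_
  have hx := hA.eq_zero_of_dotProduct_mulVec_self_eq_zero ha
  have hy := hS₁pd.eq_zero_of_dotProduct_mulVec_self_eq_zero <| by
    rw [hS₁, dotProduct_schur_mulVec_eq hA.det_pos.ne'.isUnit D hBy, hd, ha, mul_zero, add_zero]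
  have hz := hS₂pd.eq_zero_of_dotProduct_mulVec_self_eq_zero <| by
    rw [hS₂, dotProduct_add_mul_mul_transpose_mulVec, he, ht, add_zero]
  ext ((i | j) | k) <;> simp [hx, hy, hz]

/-- Negative eigenvalue bounds for the Schur-complement preconditioned matrix:
every negative eigenvalue of `M⁻¹K` lies in `[−(1+√5)/2, (1−√5)/2]`. -/
theorem stmt_13 (n m p : ℕ) (hn : 0 < n) (hm : 0 < m) (hp : 0 < p)
    (A : Matrix (Fin n) (Fin n) ℝ) (B : Matrix (Fin m) (Fin n) ℝ)
    (C : Matrix (Fin p) (Fin m) ℝ) (D : Matrix (Fin m) (Fin m) ℝ)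
    (E : Matrix (Fin p) (Fin p) ℝ)
    (hA : A.PosDef) (hD : D.PosSemidef) (hE : E.PosSemidef)
    (K : Matrix ((Fin n ⊕ Fin m) ⊕ Fin p) ((Fin n ⊕ Fin m) ⊕ Fin p) ℝ)
    (hK : K = fromBlocks (fromBlocks A Bᵀ B (-D)) (fromRows 0 Cᵀ) (fromCols 0 C) E)
    (S₁ : Matrix (Fin m) (Fin m) ℝ) (hS₁ : S₁ = D + B * A⁻¹ * Bᵀ)
    (S₂ : Matrix (Fin p) (Fin p) ℝ) (hS₂ : S₂ = E + C * S₁⁻¹ * Cᵀ)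
    (hS₁pd : S₁.PosDef) (hS₂pd : S₂.PosDef)
    (M : Matrix ((Fin n ⊕ Fin m) ⊕ Fin p) ((Fin n ⊕ Fin m) ⊕ Fin p) ℝ)
    (hM : M = fromBlocks (fromBlocks A 0 0 S₁) 0 0 S₂) :
    ∀ (lam : ℝ) (v : (Fin n ⊕ Fin m) ⊕ Fin p → ℝ), v ≠ 0 →
      K.mulVec v = lam • M.mulVec v → lam < 0 →
      -(1 + Real.sqrt 5) / 2 ≤ lam ∧ lam ≤ (1 - Real.sqrt 5) / 2 :=
  stmt_13_general n m p A B C D E hA hD hE K hK S₁ hS₁ S₂ hS₂ hS₁pd hS₂pd M hM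
end

section
/- Positive eigenvalue bounds for the Schur-complement preconditioned matrix: every positive eigenvalue λ of M⁻¹K satisfies λ³ − λ² − 2λ + 1 ≤ 0; equivalently, λ lies between the smallest and largest positive roots of the cubic λ³ − λ² − 2λ + 1 (approximately 0.4450 and 1.8019). -/
/-!
Write an eigenvector as `(x, y, z)` and put `α = λ² - λ - 1`. The first block row gives
`Bᵀ y = (λ - 1) A x`, which eliminates `x` from the second: `w := (λ - 1) Cᵀ z = α S₁ y + λ D y`.
Pairing the third row with `z` and multiplying by `(λ - 1)²` gives
`(λ - 1) ⟪y, w⟫ = (λ - 1)³ e + λ ⟪w, S₁⁻¹ w⟫`, a relation between `e = ⟪z, E z⟫ ≥ 0` and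
`s = ⟪y, S₁ y⟫ ≥ d = ⟪y, D y⟫ ≥ d₂ = ⟪D y, S₁⁻¹ D y⟫ ≥ 0` (the inequalities hold as `0 ≤ D ≤ S₁`);
moreover `s > 0`, because `y = 0` would force `x = z = 0`. If the cubic `λ α - (λ - 1)` were
positive, `(λ - 1)³ e` would come out negative for `λ > 1` (where `α > 0`), and positive for
`λ < 1`, as a positive combination of `s - d`, `d` and `d - d₂`.
-/

open Matrix

namespace Matrix

variable {n : Type*} [Fintype n]

theorem IsSymm.dotProduct_mulVec_comm {α : Type*} [CommSemiring α] {S : Matrix n n α}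
    (hS : S.IsSymm) (u v : n → α) : u ⬝ᵥ S *ᵥ v = v ⬝ᵥ S *ᵥ u := by
  rw [← dotProduct_transpose_mulVec, hS.eq]

variable [DecidableEq n]

theorem eq_zero_of_mulVec_eq_smul_mulVec {K : Type*} [Field K] {P : Matrix n n K}
    (hP : P.det ≠ 0) {c : K} (hc : c ≠ 1) {u : n → K} (h : P *ᵥ u = c • P *ᵥ u) : u = 0 := by
  refine eq_zero_of_mulVec_eq_zero hP ((smul_eq_zero.1 ?_).resolve_left (sub_ne_zero.2 hc.symm))
  rw [sub_smul, one_smul, ← h, sub_self]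

theorem mulVec_nonsing_inv_mulVec {α : Type*} [CommRing α] {S : Matrix n n α}
    (h : IsUnit S.det) (u : n → α) : S *ᵥ S⁻¹ *ᵥ u = u := by
  simp [mulVec_mulVec, mul_nonsing_inv _ h]

theorem nonsing_inv_mulVec_mulVec {α : Type*} [CommRing α] {S : Matrix n n α}
    (h : IsUnit S.det) (u : n → α) : S⁻¹ *ᵥ S *ᵥ u = u := by
  simp [mulVec_mulVec, nonsing_inv_mul _ h]

theorem PosSemidef.dotProduct_inv_mulVec_le {D S : Matrix n n ℝ}
    (hD : D.PosSemidef) (hS : S.PosDef) (hSD : (S - D).PosSemidef) (y : n → ℝ) :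
    D *ᵥ y ⬝ᵥ S⁻¹ *ᵥ D *ᵥ y ≤ y ⬝ᵥ D *ᵥ y := by
  set u := S⁻¹ *ᵥ D *ᵥ y
  have hSu : S *ᵥ u = D *ᵥ y := mulVec_nonsing_inv_mulVec hS.det_pos.ne'.isUnit _
  have h₁ : 0 ≤ (u - y) ⬝ᵥ D *ᵥ (u - y) := hD.dotProduct_mulVec_nonneg _
  have h₂ : 0 ≤ u ⬝ᵥ (S - D) *ᵥ u := hSD.dotProduct_mulVec_nonneg _
  have hD_comm := (isHermitian_iff_isSymm.1 hD.isHermitian).dotProduct_mulVec_comm u y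
  simp only [mulVec_sub, sub_mulVec, dotProduct_sub, sub_dotProduct, hSu] at h₁ h₂
  rw [dotProduct_comm]
  linarith

end Matrix

namespace SchurPreconditioner

variable {l m n : Type*} [Fintype l] [Fintype m] [Fintype n]
  {A : Matrix l l ℝ} {B : Matrix m l ℝ} {C : Matrix n m ℝ} {D : Matrix m m ℝ} {E : Matrix n n ℝ}
  {S₁ : Matrix m m ℝ} {S₂ : Matrix n n ℝ} {lam : ℝ} {x : l → ℝ} {y : m → ℝ} {z : n → ℝ}

theorem block_eigen_iff :
    fromBlocks (fromBlocks A Bᵀ B (-D)) (fromRows 0 Cᵀ) (fromCols 0 C) E *ᵥ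
        Sum.elim (Sum.elim x y) z =
      lam • fromBlocks (fromBlocks A 0 0 S₁) 0 0 S₂ *ᵥ Sum.elim (Sum.elim x y) z ↔
    A *ᵥ x + Bᵀ *ᵥ y = lam • A *ᵥ x ∧ B *ᵥ x - D *ᵥ y + Cᵀ *ᵥ z = lam • S₁ *ᵥ y ∧
      C *ᵥ y + E *ᵥ z = lam • S₂ *ᵥ z := by
  simp [funext_iff, Sum.forall, fromBlocks_mulVec, fromRows_mulVec, neg_mulVec, sub_eq_add_neg,
    and_assoc]

theorem middle_ne_zero [DecidableEq l] [DecidableEq m] [DecidableEq n] (hA : A.PosDef)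
    (hS₂pd : S₂.PosDef) (hS₂ : S₂ = E + C * S₁⁻¹ * Cᵀ) (hlam : lam ≠ 1) (hv : Sum.elim (Sum.elim x y) z ≠ 0)
    (h₁ : A *ᵥ x + Bᵀ *ᵥ y = lam • A *ᵥ x) (h₂ : B *ᵥ x - D *ᵥ y + Cᵀ *ᵥ z = lam • S₁ *ᵥ y)
    (h₃ : C *ᵥ y + E *ᵥ z = lam • S₂ *ᵥ z) : y ≠ 0 := by
  rintro rfl
  have hx : x = 0 := eq_zero_of_mulVec_eq_smul_mulVec hA.det_pos.ne' hlam (by simpa using h₁)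
  have hCz : Cᵀ *ᵥ z = 0 := by simpa [hx] using h₂
  have hz : z = 0 := by
    refine eq_zero_of_mulVec_eq_smul_mulVec hS₂pd.det_pos.ne' hlam ?_
    simpa [hS₂, add_mulVec, ← mulVec_mulVec, hCz] using h₃
  exact hv (by simp [hx, hz])

theorem sub_one_smul_transpose_mulVec_eq [DecidableEq l] (hA : A.PosDef) (hS₁ : S₁ = D + B * A⁻¹ * Bᵀ)
    (h₁ : A *ᵥ x + Bᵀ *ᵥ y = lam • A *ᵥ x) (h₂ : B *ᵥ x - D *ᵥ y + Cᵀ *ᵥ z = lam • S₁ *ᵥ y) :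
    (lam - 1) • Cᵀ *ᵥ z = (lam ^ 2 - lam - 1) • S₁ *ᵥ y + lam • D *ᵥ y := by
  have hBy : Bᵀ *ᵥ y = (lam - 1) • A *ᵥ x := by linear_combination (norm := module) h₁
  have hBx : (lam - 1) • B *ᵥ x = S₁ *ᵥ y - D *ᵥ y := by
    rw [hS₁, add_mulVec, ← mulVec_mulVec, ← mulVec_mulVec, hBy, mulVec_smul,
      nonsing_inv_mulVec_mulVec hA.det_pos.ne'.isUnit, mulVec_smul]
    abel
  linear_combination (norm := module) (lam - 1) • h₂ - hBx

theorem dotProduct_third_row [DecidableEq m] (hS₂ : S₂ = E + C * S₁⁻¹ * Cᵀ)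
    (h₃ : C *ᵥ y + E *ᵥ z = lam • S₂ *ᵥ z) :
    y ⬝ᵥ Cᵀ *ᵥ z + z ⬝ᵥ E *ᵥ z = lam * (z ⬝ᵥ E *ᵥ z + Cᵀ *ᵥ z ⬝ᵥ S₁⁻¹ *ᵥ Cᵀ *ᵥ z) := by
  have h := congrArg (z ⬝ᵥ ·) h₃
  simp only [hS₂, dotProduct_add, dotProduct_smul, add_mulVec, ← mulVec_mulVec, smul_eq_mul,
    dotProduct_mulVec z C, ← mulVec_transpose] at h
  rwa [dotProduct_comm y]

theorem energy_identity [DecidableEq l] [DecidableEq m] (hA : A.PosDef)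
    (hS₁ : S₁ = D + B * A⁻¹ * Bᵀ) (hS₁pd : S₁.PosDef) (hS₂ : S₂ = E + C * S₁⁻¹ * Cᵀ)
    (h₁ : A *ᵥ x + Bᵀ *ᵥ y = lam • A *ᵥ x) (h₂ : B *ᵥ x - D *ᵥ y + Cᵀ *ᵥ z = lam • S₁ *ᵥ y)
    (h₃ : C *ᵥ y + E *ᵥ z = lam • S₂ *ᵥ z) :
    (lam - 1) * ((lam ^ 2 - lam - 1) * (y ⬝ᵥ S₁ *ᵥ y) + lam * (y ⬝ᵥ D *ᵥ y)) =
      (lam - 1) ^ 3 * (z ⬝ᵥ E *ᵥ z) + lam * ((lam ^ 2 - lam - 1) ^ 2 * (y ⬝ᵥ S₁ *ᵥ y) +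
        2 * (lam ^ 2 - lam - 1) * lam * (y ⬝ᵥ D *ᵥ y) + lam ^ 2 * (D *ᵥ y ⬝ᵥ S₁⁻¹ *ᵥ D *ᵥ y)) := by
  have hS₁unit := hS₁pd.det_pos.ne'.isUnit
  have hS₁comm := (isHermitian_iff_isSymm.1 hS₁pd.isHermitian).dotProduct_mulVec_comm
  have hw := sub_one_smul_transpose_mulVec_eq hA hS₁ h₁ h₂
  have hc : (lam - 1) * (y ⬝ᵥ Cᵀ *ᵥ z) =
      (lam ^ 2 - lam - 1) * (y ⬝ᵥ S₁ *ᵥ y) + lam * (y ⬝ᵥ D *ᵥ y) := by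
    simpa [dotProduct_add, dotProduct_smul] using congrArg (y ⬝ᵥ ·) hw
  have hT : (lam - 1) ^ 2 * (Cᵀ *ᵥ z ⬝ᵥ S₁⁻¹ *ᵥ Cᵀ *ᵥ z) =
      (lam ^ 2 - lam - 1) ^ 2 * (y ⬝ᵥ S₁ *ᵥ y) + 2 * (lam ^ 2 - lam - 1) * lam * (y ⬝ᵥ D *ᵥ y) +
        lam ^ 2 * (D *ᵥ y ⬝ᵥ S₁⁻¹ *ᵥ D *ᵥ y) := by
    have h := congrArg (fun w => w ⬝ᵥ S₁⁻¹ *ᵥ w) hw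
    simp only [mulVec_add, mulVec_smul, dotProduct_add, add_dotProduct, smul_dotProduct,
      dotProduct_smul, smul_eq_mul, nonsing_inv_mulVec_mulVec hS₁unit] at h
    rw [dotProduct_comm (S₁ *ᵥ y), dotProduct_comm (D *ᵥ y) y, dotProduct_comm (S₁ *ᵥ y),
      hS₁comm (S₁⁻¹ *ᵥ D *ᵥ y) y, mulVec_nonsing_inv_mulVec hS₁unit] at h
    linear_combination h
  linear_combination (lam - 1) ^ 2 * dotProduct_third_row hS₂ h₃ - (lam - 1) * hc + lam * hT

theorem cubic_nonpos_of_energy_identity {s d d₂ e : ℝ} (hlam : 0 < lam) (hs : 0 < s)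
    (hd : 0 ≤ d) (hds : d ≤ s) (hd₂ : 0 ≤ d₂) (hd₂d : d₂ ≤ d) (he : 0 ≤ e)
    (h : (lam - 1) * ((lam ^ 2 - lam - 1) * s + lam * d) = (lam - 1) ^ 3 * e +
      lam * ((lam ^ 2 - lam - 1) ^ 2 * s + 2 * (lam ^ 2 - lam - 1) * lam * d + lam ^ 2 * d₂)) :
    lam ^ 3 - lam ^ 2 - 2 * lam + 1 ≤ 0 := by
  by_contra! hq
  rcases lt_or_ge lam 1 with hlt | hge
  · -- With `f(t) = (λ - 1)(α + λt) - λ(α + λt)²`, `h` says that `(λ - 1)³ e` is the quadratic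
    -- form of `f(S₁^{-1/2} D S₁^{-1/2})` at `S₁^{1/2} y`; `key` is the interpolation
    -- `f(t) = (1 - t) f(0) + t f(1) + λ³ t (1 - t)`, with `f(0), f(1) > 0` here.
    have hf₀ : 0 < -(lam ^ 2 - lam - 1) * (lam ^ 3 - lam ^ 2 - 2 * lam + 1) :=
      mul_pos (by nlinarith) hq
    have hf₁ : 0 < (lam - 1) ^ 2 * (lam + 1) * (1 - lam - lam ^ 2) := by
      have : 0 < 1 - lam - lam ^ 2 := by nlinarith
      have : 0 < (lam - 1) ^ 2 := by nlinarith
      positivity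
    have key : (lam - 1) ^ 3 * e =
        -(lam ^ 2 - lam - 1) * (lam ^ 3 - lam ^ 2 - 2 * lam + 1) * (s - d) +
          (lam - 1) ^ 2 * (lam + 1) * (1 - lam - lam ^ 2) * d + lam ^ 3 * (d - d₂) := by
      linear_combination -h
    have hpos : 0 < -(lam ^ 2 - lam - 1) * (lam ^ 3 - lam ^ 2 - 2 * lam + 1) * (s - d) +
        (lam - 1) ^ 2 * (lam + 1) * (1 - lam - lam ^ 2) * d := by
      rcases hd.eq_or_lt with rfl | hd
      · simpa using mul_pos hf₀ hs
      · exact add_pos_of_nonneg_of_pos (mul_nonneg hf₀.le (sub_nonneg.2 hds)) (mul_pos hf₁ hd)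
    have he' : (lam - 1) ^ 3 * e ≤ 0 := mul_nonpos_of_nonpos_of_nonneg (by nlinarith) he
    linarith [mul_nonneg (pow_nonneg hlam.le 3) (sub_nonneg.2 hd₂d)]
  · have hα : 0 < lam ^ 2 - lam - 1 := by nlinarith
    have key : (lam - 1) ^ 3 * e =
        -(lam ^ 3 - lam ^ 2 - 2 * lam + 1) * ((lam ^ 2 - lam - 1) * s + lam * d) -
          lam ^ 2 * (lam ^ 2 - lam - 1) * d - lam ^ 3 * d₂ := by
      linear_combination -h
    have he' : 0 ≤ (lam - 1) ^ 3 * e := mul_nonneg (pow_nonneg (by linarith) 3) he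
    have hpos : 0 < (lam ^ 3 - lam ^ 2 - 2 * lam + 1) * ((lam ^ 2 - lam - 1) * s + lam * d) := by
      positivity
    linarith [mul_nonneg (mul_nonneg (sq_nonneg lam) hα.le) hd,
      mul_nonneg (pow_nonneg hlam.le 3) hd₂]

end SchurPreconditioner

theorem stmt_14_general (n m p : ℕ)
    (A : Matrix (Fin n) (Fin n) ℝ) (B : Matrix (Fin m) (Fin n) ℝ)
    (C : Matrix (Fin p) (Fin m) ℝ) (D : Matrix (Fin m) (Fin m) ℝ)
    (E : Matrix (Fin p) (Fin p) ℝ)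
    (hA : A.PosDef) (hD : D.PosSemidef) (hE : E.PosSemidef)
    (K : Matrix ((Fin n ⊕ Fin m) ⊕ Fin p) ((Fin n ⊕ Fin m) ⊕ Fin p) ℝ)
    (hK : K = fromBlocks (fromBlocks A Bᵀ B (-D)) (fromRows 0 Cᵀ) (fromCols 0 C) E)
    (S₁ : Matrix (Fin m) (Fin m) ℝ) (hS₁ : S₁ = D + B * A⁻¹ * Bᵀ)
    (S₂ : Matrix (Fin p) (Fin p) ℝ) (hS₂ : S₂ = E + C * S₁⁻¹ * Cᵀ)
    (hS₁pd : S₁.PosDef) (hS₂pd : S₂.PosDef)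
    (M : Matrix ((Fin n ⊕ Fin m) ⊕ Fin p) ((Fin n ⊕ Fin m) ⊕ Fin p) ℝ)
    (hM : M = fromBlocks (fromBlocks A 0 0 S₁) 0 0 S₂) :
    ∀ (lam : ℝ) (v : (Fin n ⊕ Fin m) ⊕ Fin p → ℝ), v ≠ 0 →
      K.mulVec v = lam • M.mulVec v → 0 < lam →
      lam ^ 3 - lam ^ 2 - 2 * lam + 1 ≤ 0 := by
  intro lam v hv hKv hlam
  subst hK hM
  obtain ⟨x, y, z, rfl⟩ : ∃ x y z, v = Sum.elim (Sum.elim x y) z :=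
    ⟨_, _, _, by ext ((i | j) | k) <;> rfl⟩
  obtain ⟨h₁, h₂, h₃⟩ := SchurPreconditioner.block_eigen_iff.1 hKv
  rcases eq_or_ne lam 1 with rfl | hlam₁
  · norm_num
  have hy := SchurPreconditioner.middle_ne_zero hA hS₂pd hS₂ hlam₁ hv h₁ h₂ h₃
  have hSD : (S₁ - D).PosSemidef := by
    simpa [hS₁] using hA.inv.posSemidef.mul_mul_conjTranspose_same B
  have hds : y ⬝ᵥ D *ᵥ y ≤ y ⬝ᵥ S₁ *ᵥ y :=
    sub_nonneg.1 (by simpa [sub_mulVec] using hSD.dotProduct_mulVec_nonneg y)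
  exact SchurPreconditioner.cubic_nonpos_of_energy_identity hlam
    (hS₁pd.dotProduct_mulVec_pos hy)
    (hD.dotProduct_mulVec_nonneg y) hds (hS₁pd.inv.posSemidef.dotProduct_mulVec_nonneg _)
    (hD.dotProduct_inv_mulVec_le hS₁pd hSD y) (hE.dotProduct_mulVec_nonneg z)
    (SchurPreconditioner.energy_identity hA hS₁ hS₁pd hS₂ h₁ h₂ h₃)

/-- Positive eigenvalue bounds for the Schur-complement preconditioned matrix:
every positive eigenvalue `λ` of `M⁻¹K` satisfies `λ³ − λ² − 2λ + 1 ≤ 0`. -/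
theorem stmt_14 (n m p : ℕ) (hn : 0 < n) (hm : 0 < m) (hp : 0 < p)
    (A : Matrix (Fin n) (Fin n) ℝ) (B : Matrix (Fin m) (Fin n) ℝ)
    (C : Matrix (Fin p) (Fin m) ℝ) (D : Matrix (Fin m) (Fin m) ℝ)
    (E : Matrix (Fin p) (Fin p) ℝ)
    (hA : A.PosDef) (hD : D.PosSemidef) (hE : E.PosSemidef)
    (K : Matrix ((Fin n ⊕ Fin m) ⊕ Fin p) ((Fin n ⊕ Fin m) ⊕ Fin p) ℝ)
    (hK : K = fromBlocks (fromBlocks A Bᵀ B (-D)) (fromRows 0 Cᵀ) (fromCols 0 C) E)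
    (S₁ : Matrix (Fin m) (Fin m) ℝ) (hS₁ : S₁ = D + B * A⁻¹ * Bᵀ)
    (S₂ : Matrix (Fin p) (Fin p) ℝ) (hS₂ : S₂ = E + C * S₁⁻¹ * Cᵀ)
    (hS₁pd : S₁.PosDef) (hS₂pd : S₂.PosDef)
    (M : Matrix ((Fin n ⊕ Fin m) ⊕ Fin p) ((Fin n ⊕ Fin m) ⊕ Fin p) ℝ)
    (hM : M = fromBlocks (fromBlocks A 0 0 S₁) 0 0 S₂) :
    ∀ (lam : ℝ) (v : (Fin n ⊕ Fin m) ⊕ Fin p → ℝ), v ≠ 0 →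
      K.mulVec v = lam • M.mulVec v → 0 < lam →
      lam ^ 3 - lam ^ 2 - 2 * lam + 1 ≤ 0 :=
  stmt_14_general n m p A B C D E hA hD hE K hK S₁ hS₁ S₂ hS₂ hS₁pd hS₂pd M hM
end

section
/- Singular value bounds for the transformed block B̃ = S̃₁^{-1/2} B Ã^{-1/2}: for all y ∈ ℝᵐ, (α₀·α₁/(1 + η_D)) · yᵀ S̃₁ y ≤ yᵀ B Ã⁻¹ Bᵀ y ≤ β₀·β₁ · yᵀ S̃₁ y; equivalently, the singular values of B̃ lie in the interval [√(α₀α₁/(1 + η_D)), √(β₀β₁)]. -/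
/-!
Write `v = Bᵀ y`, so that `yᵀ B M⁻¹ Bᵀ y = vᵀ M⁻¹ v` for `M = A, Ã`. Spectral equivalence passes to
inverses with the constants exchanged, because `vᵀ M⁻¹ v = max_x (2 xᵀv - xᵀ M x)`; hence
`α₀ vᵀA⁻¹v ≤ vᵀÃ⁻¹v ≤ β₀ vᵀA⁻¹v`. Since `0 ≤ D ≤ η_D · B A⁻¹ Bᵀ`, the Schur complement
`S₁ = D + B A⁻¹ Bᵀ` lies between `B A⁻¹ Bᵀ` and `(1 + η_D) · B A⁻¹ Bᵀ`, and chaining these with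
`α₁ S̃₁ ≤ S₁ ≤ β₁ S̃₁` gives both bounds.
-/

open Matrix

namespace Matrix

variable {ι κ : Type*} [Fintype ι] [Fintype κ]

lemma dotProduct_mul_mul_transpose_mulVec (B : Matrix κ ι ℝ) (M : Matrix ι ι ℝ) (y : κ → ℝ) :
    y ⬝ᵥ (B * M * Bᵀ) *ᵥ y = (Bᵀ *ᵥ y) ⬝ᵥ M *ᵥ (Bᵀ *ᵥ y) := by
  rw [← mulVec_mulVec, ← mulVec_mulVec, dotProduct_mulVec, ← mulVec_transpose]

lemma IsHermitian.dotProduct_mulVec_comm {M : Matrix ι ι ℝ} (hM : M.IsHermitian) (x y : ι → ℝ) :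
    x ⬝ᵥ M *ᵥ y = y ⬝ᵥ M *ᵥ x := by
  rw [dotProduct_mulVec, ← mulVec_transpose, show Mᵀ = M from hM, dotProduct_comm]

variable [DecidableEq ι]

lemma mulVec_nonsing_inv_mulVec_s15 {M : Matrix ι ι ℝ} (hM : IsUnit M.det) (v : ι → ℝ) :
    M *ᵥ (M⁻¹ *ᵥ v) = v := by
  rw [mulVec_mulVec, mul_nonsing_inv M hM, one_mulVec]

lemma PosDef.two_mul_dotProduct_sub_le {M : Matrix ι ι ℝ} (hM : M.PosDef) (x v : ι → ℝ) :
    2 * (x ⬝ᵥ v) - x ⬝ᵥ M *ᵥ x ≤ v ⬝ᵥ M⁻¹ *ᵥ v := by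
  set u := M⁻¹ *ᵥ v
  have hMu : M *ᵥ u = v := mulVec_nonsing_inv_mulVec_s15 (isUnit_iff_ne_zero.mpr hM.det_pos.ne') v
  have hsq : 0 ≤ (x - u) ⬝ᵥ M *ᵥ (x - u) := by
    simpa using hM.posSemidef.dotProduct_mulVec_nonneg (x - u)
  have hcross : u ⬝ᵥ M *ᵥ x = x ⬝ᵥ v := by rw [hM.1.dotProduct_mulVec_comm, hMu]
  rw [mulVec_sub, dotProduct_sub, sub_dotProduct, sub_dotProduct, hcross, hMu,
    dotProduct_comm u v] at hsq
  linarith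

lemma PosDef.mul_dotProduct_inv_mulVec_le {A A' : Matrix ι ι ℝ} (hA : A.PosDef)
    (hA' : IsUnit A'.det) {c : ℝ} (hc : 0 ≤ c) (h : ∀ x, c * (x ⬝ᵥ A *ᵥ x) ≤ x ⬝ᵥ A' *ᵥ x)
    (v : ι → ℝ) : c * (v ⬝ᵥ A'⁻¹ *ᵥ v) ≤ v ⬝ᵥ A⁻¹ *ᵥ v := by
  set u := A'⁻¹ *ᵥ v
  have hA'u : u ⬝ᵥ A' *ᵥ u = v ⬝ᵥ u := by
    rw [mulVec_nonsing_inv_mulVec_s15 hA' v, dotProduct_comm]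
  -- the variational bound for `A⁻¹`, tested at `x = c • A'⁻¹ v`
  have hvar := hA.two_mul_dotProduct_sub_le (c • u) v
  have hcu := mul_le_mul_of_nonneg_left (h u) hc
  rw [smul_dotProduct, mulVec_smul, dotProduct_smul, smul_dotProduct, smul_eq_mul, smul_eq_mul,
    smul_eq_mul, dotProduct_comm u v] at hvar
  rw [hA'u] at hcu
  nlinarith

end Matrix

theorem stmt_15_general (n m : ℕ)
    (A : Matrix (Fin n) (Fin n) ℝ) (B : Matrix (Fin m) (Fin n) ℝ)
    (D : Matrix (Fin m) (Fin m) ℝ)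
    (hA : A.PosDef) (hD : D.PosSemidef)
    (S₁ : Matrix (Fin m) (Fin m) ℝ) (hS₁ : S₁ = D + B * A⁻¹ * Bᵀ)
    (Atil : Matrix (Fin n) (Fin n) ℝ) (S₁til : Matrix (Fin m) (Fin m) ℝ)
    (hAtil : Atil.PosDef)
    (α₀ β₀ α₁ β₁ : ℝ)
    (hα₀ : 0 < α₀) (hβ₀ : 1 ≤ β₀)
    (hAequiv : ∀ x : Fin n → ℝ,
      α₀ * (x ⬝ᵥ Atil.mulVec x) ≤ x ⬝ᵥ A.mulVec x ∧
      x ⬝ᵥ A.mulVec x ≤ β₀ * (x ⬝ᵥ Atil.mulVec x))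
    (hS₁equiv : ∀ y : Fin m → ℝ,
      α₁ * (y ⬝ᵥ S₁til.mulVec y) ≤ y ⬝ᵥ S₁.mulVec y ∧
      y ⬝ᵥ S₁.mulVec y ≤ β₁ * (y ⬝ᵥ S₁til.mulVec y))
    (ηD : ℝ) (hηD0 : 0 ≤ ηD)
    (hηD : ∀ y : Fin m → ℝ, y ⬝ᵥ D.mulVec y ≤ ηD * (y ⬝ᵥ (B * A⁻¹ * Bᵀ).mulVec y)) :
    ∀ y : Fin m → ℝ,
      α₀ * α₁ / (1 + ηD) * (y ⬝ᵥ S₁til.mulVec y) ≤ y ⬝ᵥ (B * Atil⁻¹ * Bᵀ).mulVec y ∧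
      y ⬝ᵥ (B * Atil⁻¹ * Bᵀ).mulVec y ≤ β₀ * β₁ * (y ⬝ᵥ S₁til.mulVec y) := by
  intro y
  have hβ₀pos : 0 < β₀ := by linarith
  have hηpos : 0 < 1 + ηD := by linarith
  rw [dotProduct_mul_mul_transpose_mulVec]
  have hS₁split : y ⬝ᵥ S₁ *ᵥ y = y ⬝ᵥ D *ᵥ y + (Bᵀ *ᵥ y) ⬝ᵥ A⁻¹ *ᵥ (Bᵀ *ᵥ y) := by
    rw [hS₁, add_mulVec, dotProduct_add, dotProduct_mul_mul_transpose_mulVec]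
  have hDnonneg : 0 ≤ y ⬝ᵥ D *ᵥ y := by simpa using hD.dotProduct_mulVec_nonneg y
  have hDle := hηD y
  rw [dotProduct_mul_mul_transpose_mulVec] at hDle
  obtain ⟨hS₁lower, hS₁upper⟩ := hS₁equiv y
  have hinv_lower := hAtil.mul_dotProduct_inv_mulVec_le
    (isUnit_iff_ne_zero.mpr hA.det_pos.ne') hα₀.le (fun x ↦ (hAequiv x).1) (Bᵀ *ᵥ y)
  have hinv_upper := hA.mul_dotProduct_inv_mulVec_le
    (isUnit_iff_ne_zero.mpr hAtil.det_pos.ne') (inv_nonneg.mpr hβ₀pos.le)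
    (fun x ↦ (inv_mul_le_iff₀ hβ₀pos).mpr (hAequiv x).2) (Bᵀ *ᵥ y)
  rw [inv_mul_le_iff₀ hβ₀pos] at hinv_upper
  constructor
  · calc α₀ * α₁ / (1 + ηD) * (y ⬝ᵥ S₁til *ᵥ y)
        = α₀ * (α₁ * (y ⬝ᵥ S₁til *ᵥ y) / (1 + ηD)) := by ring
      _ ≤ α₀ * ((Bᵀ *ᵥ y) ⬝ᵥ A⁻¹ *ᵥ (Bᵀ *ᵥ y)) := by
        gcongr
        rw [div_le_iff₀' hηpos]
        linarith
      _ ≤ _ := hinv_lower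
  · calc _ ≤ β₀ * ((Bᵀ *ᵥ y) ⬝ᵥ A⁻¹ *ᵥ (Bᵀ *ᵥ y)) := hinv_upper
      _ ≤ β₀ * (β₁ * (y ⬝ᵥ S₁til *ᵥ y)) := by gcongr; linarith
      _ = β₀ * β₁ * (y ⬝ᵥ S₁til *ᵥ y) := by ring

/-- Singular value bounds for the transformed block `B̃ = S₁til^{-1/2} B Atil^{-1/2}`,
expressed via quadratic forms: for all `y`,
`(α₀α₁/(1+η_D)) · yᵀS₁tily ≤ yᵀ B Atil⁻¹ Bᵀ y ≤ β₀β₁ · yᵀS₁tily`. -/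
theorem stmt_15 (n m p : ℕ) (hp : 0 < p) (hmp : p ≤ m) (hnm : m ≤ n)
    (A : Matrix (Fin n) (Fin n) ℝ) (B : Matrix (Fin m) (Fin n) ℝ)
    (C : Matrix (Fin p) (Fin m) ℝ) (D : Matrix (Fin m) (Fin m) ℝ)
    (E : Matrix (Fin p) (Fin p) ℝ)
    (hA : A.PosDef) (hD : D.PosSemidef) (hE : E.PosSemidef)
    (hB : B.rank = m) (hC : C.rank = p)
    (S₁ : Matrix (Fin m) (Fin m) ℝ) (hS₁ : S₁ = D + B * A⁻¹ * Bᵀ)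
    (S₂ : Matrix (Fin p) (Fin p) ℝ) (hS₂ : S₂ = E + C * S₁⁻¹ * Cᵀ)
    (hS₁pd : S₁.PosDef) (hS₂pd : S₂.PosDef)
    (Atil : Matrix (Fin n) (Fin n) ℝ) (S₁til : Matrix (Fin m) (Fin m) ℝ)
    (S₂til : Matrix (Fin p) (Fin p) ℝ)
    (hAtil : Atil.PosDef) (hS₁til : S₁til.PosDef) (hS₂til : S₂til.PosDef)
    (α₀ β₀ α₁ β₁ α₂ β₂ : ℝ)
    (hα₀ : 0 < α₀) (hα₀1 : α₀ ≤ 1) (hβ₀ : 1 ≤ β₀)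
    (hα₁ : 0 < α₁) (hα₁1 : α₁ ≤ 1) (hβ₁ : 1 ≤ β₁)
    (hα₂ : 0 < α₂) (hα₂1 : α₂ ≤ 1) (hβ₂ : 1 ≤ β₂)
    (hAequiv : ∀ x : Fin n → ℝ,
      α₀ * (x ⬝ᵥ Atil.mulVec x) ≤ x ⬝ᵥ A.mulVec x ∧
      x ⬝ᵥ A.mulVec x ≤ β₀ * (x ⬝ᵥ Atil.mulVec x))
    (hS₁equiv : ∀ y : Fin m → ℝ,
      α₁ * (y ⬝ᵥ S₁til.mulVec y) ≤ y ⬝ᵥ S₁.mulVec y ∧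
      y ⬝ᵥ S₁.mulVec y ≤ β₁ * (y ⬝ᵥ S₁til.mulVec y))
    (hS₂equiv : ∀ z : Fin p → ℝ,
      α₂ * (z ⬝ᵥ S₂til.mulVec z) ≤ z ⬝ᵥ S₂.mulVec z ∧
      z ⬝ᵥ S₂.mulVec z ≤ β₂ * (z ⬝ᵥ S₂til.mulVec z))
    (ηD : ℝ) (hηD0 : 0 ≤ ηD)
    (hηD : ∀ y : Fin m → ℝ, y ⬝ᵥ D.mulVec y ≤ ηD * (y ⬝ᵥ (B * A⁻¹ * Bᵀ).mulVec y))
    (ηE : ℝ) (hηE0 : 0 ≤ ηE)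
    (hηE : ∀ z : Fin p → ℝ, z ⬝ᵥ E.mulVec z ≤ ηE * (z ⬝ᵥ (C * S₁⁻¹ * Cᵀ).mulVec z)) :
    ∀ y : Fin m → ℝ,
      α₀ * α₁ / (1 + ηD) * (y ⬝ᵥ S₁til.mulVec y) ≤ y ⬝ᵥ (B * Atil⁻¹ * Bᵀ).mulVec y ∧
      y ⬝ᵥ (B * Atil⁻¹ * Bᵀ).mulVec y ≤ β₀ * β₁ * (y ⬝ᵥ S₁til.mulVec y) :=
  stmt_15_general n m A B D hA hD S₁ hS₁ Atil S₁til hAtil α₀ β₀ α₁ β₁ hα₀ hβ₀ hAequiv hS₁equiv ηD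
    hηD0 hηD
end

section
/- Singular value bounds for the transformed block C̃ = S̃₂^{-1/2} C S̃₁^{-1/2}: for all z ∈ ℝᵖ, (α₁·α₂/(1 + η_E)) · zᵀ S̃₂ z ≤ zᵀ C S̃₁⁻¹ Cᵀ z ≤ β₁·β₂ · zᵀ S̃₂ z; equivalently, the singular values of C̃ lie in the interval [√(α₁α₂/(1 + η_E)), √(β₁β₂)]. -/
/-!
Put `w = Cᵀz`. Then `zᵀ C M Cᵀ z = wᵀ M w`, and `zᵀ S₂ z = zᵀ E z + wᵀ S₁⁻¹ w` lies between
`wᵀ S₁⁻¹ w` and `(1 + η_E) · wᵀ S₁⁻¹ w`. Spectral equivalence of `S₁` and `S̃₁` passes to their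
inverses with the constants exchanged, because `xᵀ P⁻¹ x = max_y (2 xᵀy - yᵀ P y)` is antitone in
`P`. Chaining these with the equivalence of `S₂` and `S̃₂` gives both bounds.
-/

open Matrix

namespace Matrix

variable {n : Type*} [Fintype n]

theorem dotProduct_mul_mul_transpose_mulVec_s16 {m α : Type*} [Fintype m] [CommSemiring α]
    (C : Matrix m n α) (M : Matrix n n α) (z : m → α) :
    z ⬝ᵥ (C * M * Cᵀ) *ᵥ z = (Cᵀ *ᵥ z) ⬝ᵥ M *ᵥ (Cᵀ *ᵥ z) := by
  rw [← mulVec_mulVec, ← mulVec_mulVec, dotProduct_mulVec, mulVec_transpose]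

theorem PosSemidef.two_mul_dotProduct_mulVec_sub_le {P : Matrix n n ℝ} (hP : P.PosSemidef)
    (u y : n → ℝ) : 2 * ((P *ᵥ u) ⬝ᵥ y) - y ⬝ᵥ P *ᵥ y ≤ u ⬝ᵥ P *ᵥ u := by
  have hPT : Pᵀ = P := by simpa using hP.isHermitian.eq
  have hsymm : u ⬝ᵥ P *ᵥ y = (P *ᵥ u) ⬝ᵥ y := by
    rw [dotProduct_mulVec, ← mulVec_transpose, hPT]
  have := hP.dotProduct_mulVec_nonneg (y - u)
  simp only [star_trivial, mulVec_sub, dotProduct_sub, sub_dotProduct, hsymm,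
    dotProduct_comm y (P *ᵥ u)] at this
  linarith

variable [DecidableEq n]

theorem PosDef.two_mul_dotProduct_sub_le_s16 {P : Matrix n n ℝ} (hP : P.PosDef) (x y : n → ℝ) :
    2 * (x ⬝ᵥ y) - y ⬝ᵥ P *ᵥ y ≤ x ⬝ᵥ P⁻¹ *ᵥ x := by
  have hPu : P *ᵥ (P⁻¹ *ᵥ x) = x := by
    rw [mulVec_mulVec, mul_nonsing_inv _ hP.det_pos.ne'.isUnit, one_mulVec]
  simpa only [hPu, dotProduct_comm x] using
    hP.posSemidef.two_mul_dotProduct_mulVec_sub_le (P⁻¹ *ᵥ x) y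

theorem PosDef.dotProduct_inv_mulVec_le {P Q : Matrix n n ℝ} (hP : P.PosDef)
    (hQ : IsUnit Q.det) (h : ∀ y, y ⬝ᵥ P *ᵥ y ≤ y ⬝ᵥ Q *ᵥ y) (x : n → ℝ) :
    x ⬝ᵥ Q⁻¹ *ᵥ x ≤ x ⬝ᵥ P⁻¹ *ᵥ x := by
  set y := Q⁻¹ *ᵥ x
  have hQy : y ⬝ᵥ Q *ᵥ y = x ⬝ᵥ y := by
    rw [mulVec_mulVec, mul_nonsing_inv _ hQ, one_mulVec, dotProduct_comm]
  linarith [hP.two_mul_dotProduct_sub_le_s16 x y, h y]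

theorem PosDef.smul_dotProduct_inv_mulVec_le {P Q : Matrix n n ℝ} (hP : P.PosDef)
    (hQ : IsUnit Q.det) {c : ℝ} (hc : 0 < c) (h : ∀ y, c * (y ⬝ᵥ P *ᵥ y) ≤ y ⬝ᵥ Q *ᵥ y)
    (x : n → ℝ) : c * (x ⬝ᵥ Q⁻¹ *ᵥ x) ≤ x ⬝ᵥ P⁻¹ *ᵥ x := by
  have hle := (hP.smul hc).dotProduct_inv_mulVec_le hQ
    (by simpa only [smul_mulVec, dotProduct_smul, smul_eq_mul] using h) x
  have := invertibleOfNonzero hc.ne'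
  rw [inv_smul (A := P) c hP.det_pos.ne'.isUnit, invOf_eq_inv, smul_mulVec, dotProduct_smul,
    smul_eq_mul] at hle
  exact (le_inv_mul_iff₀ hc).1 hle

end Matrix

theorem stmt_16_general (m p : ℕ)
    (C : Matrix (Fin p) (Fin m) ℝ)
    (E : Matrix (Fin p) (Fin p) ℝ)
    (hE : E.PosSemidef)
    (S₁ : Matrix (Fin m) (Fin m) ℝ)
    (S₂ : Matrix (Fin p) (Fin p) ℝ) (hS₂ : S₂ = E + C * S₁⁻¹ * Cᵀ)
    (hS₁pd : S₁.PosDef)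
    (S₁til : Matrix (Fin m) (Fin m) ℝ)
    (S₂til : Matrix (Fin p) (Fin p) ℝ)
    (hS₁til : S₁til.PosDef)
    (α₁ β₁ α₂ β₂ : ℝ)
    (hα₁ : 0 < α₁) (hβ₁ : 1 ≤ β₁)
    (hS₁equiv : ∀ y : Fin m → ℝ,
      α₁ * (y ⬝ᵥ S₁til.mulVec y) ≤ y ⬝ᵥ S₁.mulVec y ∧
      y ⬝ᵥ S₁.mulVec y ≤ β₁ * (y ⬝ᵥ S₁til.mulVec y))
    (hS₂equiv : ∀ z : Fin p → ℝ,
      α₂ * (z ⬝ᵥ S₂til.mulVec z) ≤ z ⬝ᵥ S₂.mulVec z ∧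
      z ⬝ᵥ S₂.mulVec z ≤ β₂ * (z ⬝ᵥ S₂til.mulVec z))
    (ηE : ℝ) (hηE0 : 0 ≤ ηE)
    (hηE : ∀ z : Fin p → ℝ, z ⬝ᵥ E.mulVec z ≤ ηE * (z ⬝ᵥ (C * S₁⁻¹ * Cᵀ).mulVec z)) :
    ∀ z : Fin p → ℝ,
      α₁ * α₂ / (1 + ηE) * (z ⬝ᵥ S₂til.mulVec z) ≤ z ⬝ᵥ (C * S₁til⁻¹ * Cᵀ).mulVec z ∧
      z ⬝ᵥ (C * S₁til⁻¹ * Cᵀ).mulVec z ≤ β₁ * β₂ * (z ⬝ᵥ S₂til.mulVec z) := by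
  intro z
  set w := Cᵀ *ᵥ z
  have hβ₁pos : 0 < β₁ := by linarith
  have hS₂z : z ⬝ᵥ S₂ *ᵥ z = z ⬝ᵥ E *ᵥ z + w ⬝ᵥ S₁⁻¹ *ᵥ w := by
    rw [hS₂, add_mulVec, dotProduct_add, dotProduct_mul_mul_transpose_mulVec_s16]
  have hEz : 0 ≤ z ⬝ᵥ E *ᵥ z := by simpa using hE.dotProduct_mulVec_nonneg z
  have hηEz : z ⬝ᵥ E *ᵥ z ≤ ηE * (w ⬝ᵥ S₁⁻¹ *ᵥ w) := by
    simpa only [dotProduct_mul_mul_transpose_mulVec_s16] using hηE z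
  have hinv_lower : α₁ * (w ⬝ᵥ S₁⁻¹ *ᵥ w) ≤ w ⬝ᵥ S₁til⁻¹ *ᵥ w :=
    hS₁til.smul_dotProduct_inv_mulVec_le hS₁pd.det_pos.ne'.isUnit hα₁ (fun y => (hS₁equiv y).1) w
  have hinv_upper : w ⬝ᵥ S₁til⁻¹ *ᵥ w ≤ β₁ * (w ⬝ᵥ S₁⁻¹ *ᵥ w) :=
    (inv_mul_le_iff₀ hβ₁pos).1 <| hS₁pd.smul_dotProduct_inv_mulVec_le
      hS₁til.det_pos.ne'.isUnit (inv_pos.2 hβ₁pos)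
      (fun y => (inv_mul_le_iff₀ hβ₁pos).2 (hS₁equiv y).2) w
  rw [dotProduct_mul_mul_transpose_mulVec_s16]
  constructor
  · calc α₁ * α₂ / (1 + ηE) * (z ⬝ᵥ S₂til *ᵥ z)
        = α₁ / (1 + ηE) * (α₂ * (z ⬝ᵥ S₂til *ᵥ z)) := by ring
      _ ≤ α₁ / (1 + ηE) * ((1 + ηE) * (w ⬝ᵥ S₁⁻¹ *ᵥ w)) := by
        gcongr ?_ * ?_
        linarith [(hS₂equiv z).1]
      _ = α₁ * (w ⬝ᵥ S₁⁻¹ *ᵥ w) := by field_simp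
      _ ≤ w ⬝ᵥ S₁til⁻¹ *ᵥ w := hinv_lower
  · calc w ⬝ᵥ S₁til⁻¹ *ᵥ w
        ≤ β₁ * (w ⬝ᵥ S₁⁻¹ *ᵥ w) := hinv_upper
      _ ≤ β₁ * (β₂ * (z ⬝ᵥ S₂til *ᵥ z)) := by
        gcongr
        linarith [(hS₂equiv z).2]
      _ = β₁ * β₂ * (z ⬝ᵥ S₂til *ᵥ z) := by ring

/-- Singular value bounds for the transformed block `B̃ = S₁til^{-1/2} B Atil^{-1/2}`,
expressed via quadratic forms: for all `y`,
`(α₀α₁/(1+η_D)) · yᵀS₁tily ≤ yᵀ B Atil⁻¹ Bᵀ y ≤ β₀β₁ · yᵀS₁tily`. -/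
theorem stmt_16 (n m p : ℕ) (hp : 0 < p) (hmp : p ≤ m) (hnm : m ≤ n)
    (A : Matrix (Fin n) (Fin n) ℝ) (B : Matrix (Fin m) (Fin n) ℝ)
    (C : Matrix (Fin p) (Fin m) ℝ) (D : Matrix (Fin m) (Fin m) ℝ)
    (E : Matrix (Fin p) (Fin p) ℝ)
    (hA : A.PosDef) (hD : D.PosSemidef) (hE : E.PosSemidef)
    (hB : B.rank = m) (hC : C.rank = p)
    (S₁ : Matrix (Fin m) (Fin m) ℝ) (hS₁ : S₁ = D + B * A⁻¹ * Bᵀ)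
    (S₂ : Matrix (Fin p) (Fin p) ℝ) (hS₂ : S₂ = E + C * S₁⁻¹ * Cᵀ)
    (hS₁pd : S₁.PosDef) (hS₂pd : S₂.PosDef)
    (Atil : Matrix (Fin n) (Fin n) ℝ) (S₁til : Matrix (Fin m) (Fin m) ℝ)
    (S₂til : Matrix (Fin p) (Fin p) ℝ)
    (hAtil : Atil.PosDef) (hS₁til : S₁til.PosDef) (hS₂til : S₂til.PosDef)
    (α₀ β₀ α₁ β₁ α₂ β₂ : ℝ)
    (hα₀ : 0 < α₀) (hα₀1 : α₀ ≤ 1) (hβ₀ : 1 ≤ β₀)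
    (hα₁ : 0 < α₁) (hα₁1 : α₁ ≤ 1) (hβ₁ : 1 ≤ β₁)
    (hα₂ : 0 < α₂) (hα₂1 : α₂ ≤ 1) (hβ₂ : 1 ≤ β₂)
    (hAequiv : ∀ x : Fin n → ℝ,
      α₀ * (x ⬝ᵥ Atil.mulVec x) ≤ x ⬝ᵥ A.mulVec x ∧
      x ⬝ᵥ A.mulVec x ≤ β₀ * (x ⬝ᵥ Atil.mulVec x))
    (hS₁equiv : ∀ y : Fin m → ℝ,
      α₁ * (y ⬝ᵥ S₁til.mulVec y) ≤ y ⬝ᵥ S₁.mulVec y ∧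
      y ⬝ᵥ S₁.mulVec y ≤ β₁ * (y ⬝ᵥ S₁til.mulVec y))
    (hS₂equiv : ∀ z : Fin p → ℝ,
      α₂ * (z ⬝ᵥ S₂til.mulVec z) ≤ z ⬝ᵥ S₂.mulVec z ∧
      z ⬝ᵥ S₂.mulVec z ≤ β₂ * (z ⬝ᵥ S₂til.mulVec z))
    (ηD : ℝ) (hηD0 : 0 ≤ ηD)
    (hηD : ∀ y : Fin m → ℝ, y ⬝ᵥ D.mulVec y ≤ ηD * (y ⬝ᵥ (B * A⁻¹ * Bᵀ).mulVec y))
    (ηE : ℝ) (hηE0 : 0 ≤ ηE)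
    (hηE : ∀ z : Fin p → ℝ, z ⬝ᵥ E.mulVec z ≤ ηE * (z ⬝ᵥ (C * S₁⁻¹ * Cᵀ).mulVec z)) :
    ∀ z : Fin p → ℝ,
      α₁ * α₂ / (1 + ηE) * (z ⬝ᵥ S₂til.mulVec z) ≤ z ⬝ᵥ (C * S₁til⁻¹ * Cᵀ).mulVec z ∧
      z ⬝ᵥ (C * S₁til⁻¹ * Cᵀ).mulVec z ≤ β₁ * β₂ * (z ⬝ᵥ S₂til.mulVec z) :=
  stmt_16_general m p C E hE S₁ S₂ hS₂ hS₁pd S₁til S₂til hS₁til α₁ β₁ α₂ β₂ hα₁ hβ₁ hS₁equiv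
    hS₂equiv ηE hηE0 hηE
end
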